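/- arXiv:2009.02338 — 6 statements merged into one kernel-verified Lean document; each statement's English description precedes it below -/
import Mathlib

section
/- Let ϑ : E → ℂ be a bounded Borel function with |ϑ| ≤ 1 on E and ϑ(a) = 1, such that ∫_E ϑ dp_{t,x} = (∫_E ϑ dp_{t,a})·ϑ(x) for all t ≥ 0 and x ∈ E, and such that t ↦ ∫_E ϑ dp_{t,a} is continuous on [0,∞). Then ϑ is continuous on E, and there exists λ ∈ ℂ with Re λ ≥ 0 such that ∫_E ϑ dp_{t,x} = e^{−λt}·ϑ(x) for all t ≥ 0 and x ∈ E. -/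
/-! The map `φ t = ∫ ϑ dp_{t,a}` is continuous on `[0, ∞)`, satisfies `φ 0 = 1` and, by
Chapman–Kolmogorov and the eigen-relation, `φ (s + t) = φ s * φ t`. Choosing `h > 0` with
`c = ∫₀ʰ φ ≠ 0`, the functional equation gives `c * φ t = F (t + h) - F t` for the primitive `F`
of `φ`, so `φ` is right-differentiable with `φ' = c⁻¹ (φ h - 1) φ`, whence `φ t = exp (μ t)`.
Then `‖φ‖ ≤ 1` forces `Re μ ≤ 0`, and `ϑ = (φ 1)⁻¹ P₁ϑ` is continuous by the strong Feller
property. -/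

open MeasureTheory Set Filter intervalIntegral

section ExpSemigroup

variable {φ : ℝ → ℂ}

theorem intervalIntegrable_of_continuousOn_Ici (hφ : ContinuousOn φ (Ici 0)) {b : ℝ} (hb : 0 ≤ b) :
    IntervalIntegrable φ volume 0 b :=
  (hφ.mono fun _ hz => (uIcc_of_le hb ▸ hz).1).intervalIntegrable

theorem hasDerivWithinAt_integral_Ici_of_continuousOn (hφ : ContinuousOn φ (Ici 0)) {b : ℝ}
    (hb : 0 ≤ b) : HasDerivWithinAt (fun u => ∫ s in (0 : ℝ)..u, φ s) (φ b) (Ici b) b := by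
  have hIoi : Ioi b ⊆ Ici 0 := fun z hz => hb.trans (le_of_lt hz)
  refine integral_hasDerivWithinAt_right (t := Ioi b) ?_ ?_ ((hφ b hb).mono hIoi)
  · exact intervalIntegrable_of_continuousOn_Ici hφ hb
  · exact ⟨Ici 0, mem_of_superset self_mem_nhdsWithin hIoi,
      hφ.aestronglyMeasurable measurableSet_Ici⟩

theorem exists_pos_intervalIntegral_ne_zero (hφ : ContinuousOn φ (Ici 0)) (h0 : φ 0 ≠ 0) :
    ∃ h > 0, ∫ s in (0 : ℝ)..h, φ s ≠ 0 := by
  have hne := (hasDerivWithinAt_integral_Ici_of_continuousOn hφ le_rfl).eventually_ne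
    (c := 0) h0
  rw [Ici_sdiff_left] at hne
  exact (hne.and self_mem_nhdsWithin).exists.imp fun h hh => ⟨hh.2, hh.1⟩

theorem integral_add_eq_integral_mul (hφ_add : ∀ s t : ℝ, 0 ≤ s → 0 ≤ t → φ (s + t) = φ s * φ t)
    {h t : ℝ} (hh : 0 ≤ h) (ht : 0 ≤ t) :
    ∫ s in t..t + h, φ s = (∫ s in (0 : ℝ)..h, φ s) * φ t := calc
  ∫ s in t..t + h, φ s = ∫ s in (0 : ℝ)..h, φ (s + t) := by
    rw [integral_comp_add_right, zero_add, add_comm]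
  _ = ∫ s in (0 : ℝ)..h, φ s * φ t := integral_congr fun s hs =>
    hφ_add s t (uIcc_of_le hh ▸ hs).1 ht
  _ = (∫ s in (0 : ℝ)..h, φ s) * φ t := intervalIntegral.integral_mul_const _ _

theorem exists_hasDerivWithinAt_Ici_of_map_add (hφ : ContinuousOn φ (Ici 0)) (h0 : φ 0 ≠ 0)
    (hφ_add : ∀ s t : ℝ, 0 ≤ s → 0 ≤ t → φ (s + t) = φ s * φ t) :
    ∃ μ : ℂ, ∀ x, 0 ≤ x → HasDerivWithinAt φ (μ * φ x) (Ici x) x := by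
  obtain ⟨h, hh, hc⟩ := exists_pos_intervalIntegral_ne_zero hφ h0
  set c := ∫ s in (0 : ℝ)..h, φ s
  set F : ℝ → ℂ := fun u => ∫ s in (0 : ℝ)..u, φ s
  refine ⟨c⁻¹ * (φ h - 1), fun x hx => ?_⟩
  have hφ_eq : ∀ y ∈ Ici x, φ y = c⁻¹ * (F (y + h) - F y) := fun y hy => by
    have hy : 0 ≤ y := hx.trans hy
    rw [integral_interval_sub_left (intervalIntegrable_of_continuousOn_Ici hφ (by linarith))
      (intervalIntegrable_of_continuousOn_Ici hφ hy), integral_add_eq_integral_mul hφ_add hh.le hy,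
      inv_mul_cancel_left₀ hc]
  have hF_shift : HasDerivWithinAt (fun y => F (y + h)) (φ (x + h)) (Ici x) x := by
    have hmaps : MapsTo (· + h) (Ici x) (Ici (x + h)) := fun _ hy => add_le_add_left hy h
    have := (hasDerivWithinAt_integral_Ici_of_continuousOn hφ (by linarith : 0 ≤ x + h)).scomp x
      ((hasDerivAt_id x).add_const h).hasDerivWithinAt hmaps
    rwa [one_smul] at this
  have hF := hasDerivWithinAt_integral_Ici_of_continuousOn hφ hx
  refine (((hF_shift.sub hF).const_mul c⁻¹).congr hφ_eq (hφ_eq x self_mem_Ici)).congr_deriv ?_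
  rw [hφ_add x h hx hh.le]
  ring

theorem eq_exp_mul_of_hasDerivWithinAt_Ici {μ : ℂ} (hφ : ContinuousOn φ (Ici 0))
    (hderiv : ∀ x, 0 ≤ x → HasDerivWithinAt φ (μ * φ x) (Ici x) x) {t : ℝ} (ht : 0 ≤ t) :
    φ t = Complex.exp (μ * t) * φ 0 := by
  set g : ℝ → ℂ := fun y => Complex.exp (-μ * y) * φ y
  have hg_cont : ContinuousOn g (Icc 0 t) :=
    (by fun_prop : Continuous fun y : ℝ => Complex.exp (-μ * y)).continuousOn.mul
      (hφ.mono Icc_subset_Ici_self)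
  have hg_deriv : ∀ x ∈ Ico 0 t, HasDerivWithinAt g 0 (Ici x) x := fun x hx => by
    have hexp : HasDerivAt (fun y : ℝ => Complex.exp (-μ * y)) (Complex.exp (-μ * x) * -μ) x := by
      simpa using ((Complex.ofRealCLM.hasDerivAt (x := x)).const_mul (-μ)).cexp
    exact (hexp.hasDerivWithinAt.mul (hderiv x hx.1)).congr_deriv (by ring)
  have hg : g t = g 0 := constant_of_has_deriv_right_zero hg_cont hg_deriv t ⟨ht, le_rfl⟩
  simp only [g, Complex.ofReal_zero, mul_zero, Complex.exp_zero, one_mul] at hg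
  rw [← hg, ← mul_assoc, ← Complex.exp_add, neg_mul, add_neg_cancel, Complex.exp_zero, one_mul]

theorem exists_eq_exp_mul_of_map_add (hφ : ContinuousOn φ (Ici 0)) (h0 : φ 0 = 1)
    (hφ_add : ∀ s t : ℝ, 0 ≤ s → 0 ≤ t → φ (s + t) = φ s * φ t) :
    ∃ μ : ℂ, ∀ t, 0 ≤ t → φ t = Complex.exp (μ * t) := by
  obtain ⟨μ, hμ⟩ := exists_hasDerivWithinAt_Ici_of_map_add hφ (h0 ▸ one_ne_zero) hφ_add
  exact ⟨μ, fun t ht => by rw [eq_exp_mul_of_hasDerivWithinAt_Ici hφ hμ ht, h0, mul_one]⟩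

end ExpSemigroup

theorem stmt_2 {E : Type*} [MetricSpace E] [MeasurableSpace E] [BorelSpace E]
    (a : E) (p : ℝ → E → Measure E) (hprob : ∀ t x, IsProbabilityMeasure (p t x))
    (h0 : ∀ x, p 0 x = Measure.dirac x)
    (hCK : ∀ s t : ℝ, 0 ≤ s → 0 ≤ t → ∀ x : E, ∀ f : E → ℂ,
      Measurable f → (∃ C : ℝ, ∀ z, ‖f z‖ ≤ C) →
      ∫ y, (∫ ξ, f ξ ∂(p t y)) ∂(p s x) = ∫ ξ, f ξ ∂(p (t + s) x))
    (hSF : ∀ t : ℝ, 0 < t → ∀ f : E → ℂ, Measurable f → (∃ C : ℝ, ∀ z, ‖f z‖ ≤ C) →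
      Continuous (fun x => ∫ ξ, f ξ ∂(p t x)) ∧ ∃ C : ℝ, ∀ x, ‖∫ ξ, f ξ ∂(p t x)‖ ≤ C)
    (ϑ : E → ℂ) (hmeas : Measurable ϑ) (hbd : ∀ x, ‖ϑ x‖ ≤ 1) (ha : ϑ a = 1)
    (heig : ∀ t : ℝ, 0 ≤ t → ∀ x, ∫ ξ, ϑ ξ ∂(p t x) = (∫ ξ, ϑ ξ ∂(p t a)) * ϑ x)
    (hcont : ContinuousOn (fun t => ∫ ξ, ϑ ξ ∂(p t a)) (Set.Ici (0 : ℝ))) :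
    Continuous ϑ ∧ ∃ l : ℂ, 0 ≤ l.re ∧ ∀ t : ℝ, 0 ≤ t → ∀ x,
      ∫ ξ, ϑ ξ ∂(p t x) = Complex.exp (-l * t) * ϑ x := by
  set φ : ℝ → ℂ := fun t => ∫ ξ, ϑ ξ ∂(p t a)
  have hφ0 : φ 0 = 1 := by simp [φ, h0, ha]
  have hφ_add : ∀ s t : ℝ, 0 ≤ s → 0 ≤ t → φ (s + t) = φ s * φ t := fun s t hs ht => calc
    φ (s + t) = ∫ y, (∫ ξ, ϑ ξ ∂(p t y)) ∂(p s a) := by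
      rw [hCK s t hs ht a ϑ hmeas ⟨1, hbd⟩, add_comm]
    _ = ∫ y, φ t * ϑ y ∂(p s a) := integral_congr_ae (ae_of_all _ (heig t ht))
    _ = φ s * φ t := by rw [MeasureTheory.integral_const_mul, mul_comm]
  obtain ⟨μ, hμ⟩ := exists_eq_exp_mul_of_map_add hcont hφ0 hφ_add
  have hφ1 : ‖φ 1‖ ≤ 1 :=
    (norm_integral_le_of_norm_le_const (ae_of_all _ hbd)).trans_eq (by simp)
  have hφ1_ne : φ 1 ≠ 0 := by rw [hμ 1 zero_le_one]; exact Complex.exp_ne_zero _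
  refine ⟨?_, -μ, ?_, fun t ht x => by rw [heig t ht x, neg_neg, ← hμ t ht]⟩
  · have hϑ : ϑ = fun x => (φ 1)⁻¹ * ∫ ξ, ϑ ξ ∂(p 1 x) := funext fun x => by
      rw [heig 1 zero_le_one x, inv_mul_cancel_left₀ hφ1_ne]
    rw [hϑ]
    exact continuous_const.mul (hSF 1 one_pos ϑ hmeas ⟨1, hbd⟩).1
  · rw [hμ 1 zero_le_one, Complex.ofReal_one, mul_one, Complex.norm_exp,
      Real.exp_le_one_iff] at hφ1
    simpa using hφ1
end

section
/- For all Borel probability measures μ, ν on E there exists a unique Borel probability measure μ⋄ν on E such that ∫_E f d(μ⋄ν) = ∫_E ∫_E (∫_E f dν_{x,y}) μ(dx) ν(dy) for every continuous f : E → ℝ. The operation ⋄ is commutative and associative on the set of Borel probability measures on E, satisfies δ_a ⋄ μ = μ for every μ, is jointly continuous for the topology of weak convergence, and trivializes under the family (φ_j): ∫_E φ_j d(μ⋄ν) = (∫_E φ_j dμ)·(∫_E φ_j dν) for every j ∈ ℕ. -/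
/-! The moment map `μ ↦ (∫ φ_j dμ)_j` is a continuous injection of the compact space of
probability measures on `E` into `ℝ^ℕ`, hence a topological embedding. By the product formula the
moments of `ν x y` are `φ_j x * φ_j y`, so `(x, y) ↦ ν x y` is continuous, hence a Markov kernel,
and `μ ⋄ ρ` is the composition of this kernel with `μ ⊗ ρ`. Its moments are the products of the
moments of `μ` and `ρ`; commutativity, associativity, the unit `δ_a`, uniqueness and joint
continuity all follow from this through injectivity, resp. the embedding property, of the moment
map. -/

open MeasureTheory ProbabilityTheory

theorem measurable_toMeasure_of_continuous {α Ω : Type*} [TopologicalSpace α] [MeasurableSpace α]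
    [OpensMeasurableSpace α] [TopologicalSpace Ω] [MeasurableSpace Ω] [HasOuterApproxClosed Ω]
    [BorelSpace Ω] {u : α → ProbabilityMeasure Ω} (hu : Continuous u) :
    Measurable fun a ↦ (u a : Measure Ω) := by
  refine .measure_of_isPiSystem_of_isProbabilityMeasure
    (BorelSpace.measurable_eq.trans borel_eq_generateFrom_isClosed) isPiSystem_isClosed
    fun F hF ↦ ?_
  refine ENNReal.measurable_of_tendsto (fun n ↦ ?_)
    (tendsto_pi_nhds.2 fun a ↦ HasOuterApproxClosed.tendsto_lintegral_apprSeq hF (u a))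
  exact ((ProbabilityMeasure.continuous_lintegral_boundedContinuousFunction _).comp hu).measurable

namespace ProbabilityTheory.Kernel

variable {α Ω : Type*} [TopologicalSpace α] [MeasurableSpace α] [OpensMeasurableSpace α]
  [TopologicalSpace Ω] [MeasurableSpace Ω] [HasOuterApproxClosed Ω] [BorelSpace Ω]

noncomputable def ofContinuous (u : α → ProbabilityMeasure Ω) (hu : Continuous u) : Kernel α Ω :=
  ⟨fun a ↦ u a, measurable_toMeasure_of_continuous hu⟩

instance {u : α → ProbabilityMeasure Ω} (hu : Continuous u) : IsMarkovKernel (ofContinuous u hu) :=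
  ⟨fun a ↦ (u a).prop⟩

end ProbabilityTheory.Kernel

lemma integral_integral_integral_of_product_formula {E : Type*} [MeasurableSpace E]
    {ν : E → E → Measure E} {φ : E → ℝ} (hprod : ∀ x y, ∫ ξ, φ ξ ∂(ν x y) = φ x * φ y)
    (μ ρ : Measure E) :
    ∫ x, ∫ y, ∫ ξ, φ ξ ∂(ν x y) ∂ρ ∂μ = (∫ x, φ x ∂μ) * ∫ y, φ y ∂ρ := by
  simp_rw [hprod, integral_const_mul, integral_mul_const]

section CompactMetric

variable {E : Type*} [MetricSpace E] [CompactSpace E] [MeasurableSpace E] [BorelSpace E]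

lemma continuous_of_forall_continuous_integral_of_separating {ι X : Type*} [TopologicalSpace X]
    {φ : ι → E → ℝ} (hφ : ∀ j, Continuous (φ j))
    (hsep : ∀ μ ρ : ProbabilityMeasure E, (∀ j, ∫ x, φ j x ∂μ = ∫ x, φ j x ∂ρ) → μ = ρ)
    {u : X → ProbabilityMeasure E} (hu : ∀ j, Continuous fun x ↦ ∫ ξ, φ j ξ ∂(u x)) :
    Continuous u := by
  set T : ProbabilityMeasure E → ι → ℝ := fun μ j ↦ ∫ x, φ j x ∂μ
  have hT : Topology.IsClosedEmbedding T :=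
    (continuous_pi fun j ↦
      ProbabilityMeasure.continuous_integral_continuousMap (⟨φ j, hφ j⟩ : C(E, ℝ)))
      |>.isClosedEmbedding fun μ ρ h ↦ hsep μ ρ (congrFun h)
  exact hT.continuous_iff.2 (continuous_pi hu)

variable {ν : E → E → ProbabilityMeasure E}

noncomputable def kernelConvolution (hν : Continuous (Function.uncurry ν))
    (μ ρ : ProbabilityMeasure E) : ProbabilityMeasure E :=
  ⟨Kernel.ofContinuous _ hν ∘ₘ (μ : Measure E).prod ρ, inferInstance⟩

lemma integral_kernelConvolution (hν : Continuous (Function.uncurry ν))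
    (μ ρ : ProbabilityMeasure E) {f : E → ℝ} (hf : Continuous f) :
    ∫ ξ, f ξ ∂(kernelConvolution hν μ ρ) = ∫ x, ∫ y, ∫ ξ, f ξ ∂(ν x y) ∂ρ ∂μ := by
  have hνf : Continuous fun p : E × E ↦ ∫ ξ, f ξ ∂(ν p.1 p.2) :=
    (ProbabilityMeasure.continuous_integral_continuousMap (⟨f, hf⟩ : C(E, ℝ))).comp hν
  show ∫ ξ, f ξ ∂(Kernel.ofContinuous _ hν ∘ₘ (μ : Measure E).prod ρ) = _
  rw [Measure.comp_eq_comp_const_apply, Kernel.integral_comp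
    (hf.integrable_of_hasCompactSupport (.of_compactSpace f)), Kernel.const_apply]
  exact integral_prod _ (hνf.integrable_of_hasCompactSupport (.of_compactSpace _))

lemma integral_kernelConvolution_of_product_formula (hν : Continuous (Function.uncurry ν))
    {φ : E → ℝ} (hφ : Continuous φ) (hprod : ∀ x y, ∫ ξ, φ ξ ∂(ν x y) = φ x * φ y)
    (μ ρ : ProbabilityMeasure E) :
    ∫ ξ, φ ξ ∂(kernelConvolution hν μ ρ) = (∫ x, φ x ∂μ) * ∫ y, φ y ∂ρ := by
  rw [integral_kernelConvolution hν μ ρ hφ, integral_integral_integral_of_product_formula hprod]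

lemma continuous_uncurry_of_product_formula {ι : Type*} {φ : ι → E → ℝ}
    (hφ : ∀ j, Continuous (φ j))
    (hsep : ∀ μ ρ : ProbabilityMeasure E, (∀ j, ∫ x, φ j x ∂μ = ∫ x, φ j x ∂ρ) → μ = ρ)
    (hprod : ∀ x y j, ∫ ξ, φ j ξ ∂(ν x y) = φ j x * φ j y) :
    Continuous (Function.uncurry ν) :=
  continuous_of_forall_continuous_integral_of_separating hφ hsep fun j ↦ by
    simp only [Function.uncurry, hprod]
    exact ((hφ j).comp continuous_fst).mul ((hφ j).comp continuous_snd)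

end CompactMetric

theorem stmt_10 {E : Type*} [MetricSpace E] [CompactSpace E] [MeasurableSpace E] [BorelSpace E]
    (a : E) (φ : ℕ → E → ℝ) (hφc : ∀ j, Continuous (φ j)) (hφa : ∀ j, φ j a = 1)
    (hsep : ∀ μ ρ : Measure E, IsFiniteMeasure μ → IsFiniteMeasure ρ →
      (∀ j, ∫ x, φ j x ∂μ = ∫ x, φ j x ∂ρ) → μ = ρ)
    (ν : E → E → ProbabilityMeasure E)
    (hprod : ∀ (x y : E) (j : ℕ), ∫ ξ, φ j ξ ∂(ν x y : Measure E) = φ j x * φ j y) :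
    ∃ conv : ProbabilityMeasure E → ProbabilityMeasure E → ProbabilityMeasure E,
      (∀ (μ ρ : ProbabilityMeasure E) (f : E → ℝ), Continuous f →
        ∫ ξ, f ξ ∂(conv μ ρ : Measure E)
          = ∫ x, (∫ y, (∫ ξ, f ξ ∂(ν x y : Measure E)) ∂(ρ : Measure E)) ∂(μ : Measure E)) ∧
      (∀ (μ ρ σ : ProbabilityMeasure E),
        (∀ f : E → ℝ, Continuous f →
          ∫ ξ, f ξ ∂(σ : Measure E)
            = ∫ x, (∫ y, (∫ ξ, f ξ ∂(ν x y : Measure E)) ∂(ρ : Measure E)) ∂(μ : Measure E)) →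
        σ = conv μ ρ) ∧
      (∀ μ ρ, conv μ ρ = conv ρ μ) ∧
      (∀ μ ρ σ, conv (conv μ ρ) σ = conv μ (conv ρ σ)) ∧
      (∀ μ, conv (⟨Measure.dirac a, inferInstance⟩ : ProbabilityMeasure E) μ = μ) ∧
      Continuous (fun p : ProbabilityMeasure E × ProbabilityMeasure E => conv p.1 p.2) ∧
      (∀ (μ ρ : ProbabilityMeasure E) (j : ℕ),
        ∫ ξ, φ j ξ ∂(conv μ ρ : Measure E)
          = (∫ x, φ j x ∂(μ : Measure E)) * (∫ y, φ j y ∂(ρ : Measure E))) := by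
  have hsepP : ∀ μ ρ : ProbabilityMeasure E, (∀ j, ∫ x, φ j x ∂μ = ∫ x, φ j x ∂ρ) → μ = ρ :=
    fun μ ρ h ↦ ProbabilityMeasure.toMeasure_injective (hsep _ _ inferInstance inferInstance h)
  have hν := continuous_uncurry_of_product_formula hφc hsepP hprod
  have hmom : ∀ μ ρ j, ∫ ξ, φ j ξ ∂(kernelConvolution hν μ ρ) = (∫ x, φ j x ∂μ) * ∫ y, φ j y ∂ρ :=
    fun μ ρ j ↦ integral_kernelConvolution_of_product_formula hν (hφc j) (hprod · · j) μ ρ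
  refine ⟨kernelConvolution hν, fun μ ρ f hf ↦ integral_kernelConvolution hν μ ρ hf,
    ?_, ?_, ?_, ?_, ?_, hmom⟩
  · intro μ ρ σ hσ
    refine hsepP _ _ fun j ↦ ?_
    rw [hσ _ (hφc j), hmom, integral_integral_integral_of_product_formula (hprod · · j)]
  · exact fun μ ρ ↦ hsepP _ _ fun j ↦ by rw [hmom, hmom, mul_comm]
  · exact fun μ ρ σ ↦ hsepP _ _ fun j ↦ by rw [hmom, hmom, hmom, hmom, mul_assoc]
  · refine fun μ ↦ hsepP _ _ fun j ↦ (hmom _ μ j).trans ?_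
    rw [ProbabilityMeasure.coe_mk, integral_dirac, hφa, one_mul]
  · refine continuous_of_forall_continuous_integral_of_separating hφc hsepP fun j ↦ ?_
    have hφj := ProbabilityMeasure.continuous_integral_continuousMap (⟨φ j, hφc j⟩ : C(E, ℝ))
    simp only [hmom]
    exact (hφj.comp continuous_fst).mul (hφj.comp continuous_snd)
end

section
/- Assume that q_t(x,y,ξ) ≥ 0 for all t > 0 and x, y, ξ ∈ E, and that for each x, y ∈ E there is a Borel probability measure ν_{x,y} on E such that ∫_E f dν_{x,y} = lim_{t↓0} ∫_E f(ξ) q_t(x,y,ξ) m(dξ) for every continuous f : E → ℝ. Then the measure m is invariant for the associated generalized translations: for every continuous f : E → ℝ and every x ∈ E, ∫_E (∫_E f dν_{x,y}) m(dy) = ∫_E f dm. -/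
/-!
Fix `x` and, for `t > 0`, put `u_t(y) = ∫ f(ξ) q_t(x, y, ξ) m(dξ)`. By the growth condition the
`j`-th term of `q_t` is `O(e^{-λ_j t / 2})` uniformly, so `q_t` is continuous and can be
integrated termwise; as `∫ φ_j dm = 0` for `j ≠ 0` (orthogonality to `φ_0 ≡ 1`), `q_t(x, y, ·)`
has mass `e^{-λ_0 t}`, and so does `q_t(x, ·, ξ)` by the symmetry in `y, ξ`. Fubini then gives
`∫ u_t dm = e^{-λ_0 t} ∫ f dm`, while `q_t ≥ 0` gives
`|u_t| ≤ sup |f|`; letting `t ↓ 0`, dominated convergence turns the left side into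
`∫ (∫ f dν_{x,y}) m(dy)`.
-/

open MeasureTheory Filter Topology

theorem abs_mul_mul_div_sq_le {a b c N K : ℝ} (hN : 0 < N) (ha : |a| ≤ K * N)
    (hb : |b| ≤ K * N) (hc : |c| ≤ K * N) : |a * b * c / N ^ 2| ≤ K ^ 3 * N := by
  have hKN : 0 ≤ K * N := (abs_nonneg a).trans ha
  rw [abs_div, abs_mul, abs_mul, abs_of_pos (pow_pos hN 2), div_le_iff₀ (pow_pos hN 2)]
  calc |a| * |b| * |c| ≤ (K * N) * (K * N) * (K * N) := by gcongr
    _ = K ^ 3 * N * N ^ 2 := by ring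

section Kernel

variable {E : Type*} [MeasurableSpace E] [TopologicalSpace E] [OpensMeasurableSpace E]
  [CompactSpace E] {m : Measure E} [IsFiniteMeasure m] {K : E → E → ℝ} {f : E → ℝ}

theorem continuous_integral_mul_kernel [FirstCountableTopology E] [LocallyCompactSpace E]
    (hf : Continuous f) (hK : Continuous (Function.uncurry K)) :
    Continuous fun y => ∫ ξ, f ξ * K y ξ ∂m := by
  simpa only [Measure.restrict_univ] using continuous_parametric_integral_of_continuous
    (μ := m) ((hf.comp continuous_snd).mul hK) isCompact_univ

theorem norm_integral_mul_kernel_le {B : ℝ} (hK : Continuous (Function.uncurry K))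
    (hK0 : ∀ y ξ, 0 ≤ K y ξ) (hB : ∀ ξ, ‖f ξ‖ ≤ B) (y : E) :
    ‖∫ ξ, f ξ * K y ξ ∂m‖ ≤ B * ∫ ξ, K y ξ ∂m := by
  have hrow : Integrable (K y) m :=
    (hK.comp (Continuous.prodMk_right y)).integrable_of_hasCompactSupport
      (HasCompactSupport.of_compactSpace _)
  calc ‖∫ ξ, f ξ * K y ξ ∂m‖ ≤ ∫ ξ, ‖f ξ * K y ξ‖ ∂m := norm_integral_le_integral_norm _
    _ ≤ ∫ ξ, B * K y ξ ∂m := by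
        refine integral_mono_of_nonneg (ae_of_all _ fun ξ => norm_nonneg _)
          (hrow.const_mul B) (ae_of_all _ fun ξ => ?_)
        dsimp only
        rw [norm_mul, Real.norm_of_nonneg (hK0 y ξ)]
        exact mul_le_mul_of_nonneg_right (hB ξ) (hK0 y ξ)
    _ = B * ∫ ξ, K y ξ ∂m := integral_const_mul B _

theorem integral_integral_mul_kernel [SecondCountableTopology E] {c : ℝ}
    (hf : Continuous f) (hK : Continuous (Function.uncurry K)) (hcol : ∀ ξ, ∫ y, K y ξ ∂m = c) :
    ∫ y, ∫ ξ, f ξ * K y ξ ∂m ∂m = c * ∫ ξ, f ξ ∂m := by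
  have hint : Integrable (Function.uncurry fun y ξ => f ξ * K y ξ) (m.prod m) :=
    ((hf.comp continuous_snd).mul hK).integrable_of_hasCompactSupport
      (HasCompactSupport.of_compactSpace _)
  rw [integral_integral_swap hint]
  simp_rw [integral_const_mul, hcol, integral_mul_const, mul_comm]

end Kernel

section TripleKernel

variable {E : Type*} [MeasurableSpace E]

noncomputable def kernelTerm (m : Measure E) (lam : ℕ → ℝ) (φ : ℕ → E → ℝ) (t : ℝ) (j : ℕ)
    (x y ξ : E) : ℝ :=
  Real.exp (-lam j * t) * φ j x * φ j y * φ j ξ / Real.sqrt (∫ z, (φ j z) ^ 2 ∂m) ^ 2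

/-- The kernel `q_t(x, y, ξ)`; the constant eigenfunction is `φ 0`. -/
noncomputable def tripleKernel (m : Measure E) (lam : ℕ → ℝ) (φ : ℕ → E → ℝ) (t : ℝ)
    (x y ξ : E) : ℝ :=
  ∑' j, kernelTerm m lam φ t j x y ξ

variable {m : Measure E} {lam : ℕ → ℝ} {φ : ℕ → E → ℝ}

theorem tripleKernel_comm (t : ℝ) (x y ξ : E) :
    tripleKernel m lam φ t x y ξ = tripleKernel m lam φ t x ξ y :=
  tsum_congr fun j => by unfold kernelTerm; ring

theorem exists_summable_norm_kernelTerm_le {M t : ℝ} (ht : 0 < t)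
    (hsum : ∀ t : ℝ, 0 < t → Summable fun j => Real.exp (-lam j * t))
    (hφpos : ∀ j, 0 < Real.sqrt (∫ z, (φ j z) ^ 2 ∂m))
    (hM : ∀ j, Real.sqrt (∫ z, (φ j z) ^ 2 ∂m) ≤ M)
    (hgrowth : ∀ ε : ℝ, 0 < ε → ∃ C : ℝ, ∀ (j : ℕ) (x : E),
      |φ j x| ≤ C * Real.exp (lam j * ε) * Real.sqrt (∫ z, (φ j z) ^ 2 ∂m)) :
    ∃ b : ℕ → ℝ, Summable b ∧ ∀ j x y ξ, ‖kernelTerm m lam φ t j x y ξ‖ ≤ b j := by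
  obtain ⟨C, hC⟩ := hgrowth (t / 6) (by positivity)
  refine ⟨fun j => C ^ 3 * M * Real.exp (-lam j * (t / 2)),
    (hsum (t / 2) (by positivity)).mul_left _, fun j x y ξ => ?_⟩
  set N := Real.sqrt (∫ z, (φ j z) ^ 2 ∂m)
  have hC0 : 0 ≤ C := by
    have h := (abs_nonneg _).trans (hC j x)
    rw [mul_assoc] at h
    exact nonneg_of_mul_nonneg_left h (mul_pos (Real.exp_pos _) (hφpos j))
  -- the growth bound with `ε = t / 6`, cubed, costs half of the decay `exp (-lam j * t)`
  have hexp : Real.exp (-lam j * t) * Real.exp (lam j * (t / 6)) ^ 3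
      = Real.exp (-lam j * (t / 2)) := by
    rw [← Real.exp_nat_mul, ← Real.exp_add]; ring_nf
  calc ‖kernelTerm m lam φ t j x y ξ‖
      = Real.exp (-lam j * t) * |φ j x * φ j y * φ j ξ / N ^ 2| := by
        rw [Real.norm_eq_abs, kernelTerm, mul_assoc, mul_assoc, mul_div_assoc, abs_mul,
          abs_of_pos (Real.exp_pos _), ← mul_assoc]
    _ ≤ Real.exp (-lam j * t) * ((C * Real.exp (lam j * (t / 6))) ^ 3 * N) := by
        gcongr; exact abs_mul_mul_div_sq_le (hφpos j) (hC j x) (hC j y) (hC j ξ)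
    _ = C ^ 3 * N * Real.exp (-lam j * (t / 2)) := by rw [← hexp]; ring
    _ ≤ C ^ 3 * M * Real.exp (-lam j * (t / 2)) := by gcongr; exact hM j

section Topology

variable [TopologicalSpace E]

theorem continuous_tripleKernel {t : ℝ} {b : ℕ → ℝ} (hφc : ∀ j, Continuous (φ j))
    (hb : Summable b) (hbound : ∀ j x y ξ, ‖kernelTerm m lam φ t j x y ξ‖ ≤ b j) (x : E) :
    Continuous (Function.uncurry (tripleKernel m lam φ t x)) :=
  continuous_tsum (fun j => by unfold kernelTerm; fun_prop) hb fun j p => hbound j x p.1 p.2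

variable [OpensMeasurableSpace E]

theorem integral_tripleKernel [IsFiniteMeasure m] [NeZero m] {t : ℝ} {b : ℕ → ℝ}
    (hφc : ∀ j, Continuous (φ j)) (hb : Summable b)
    (hbound : ∀ j x y ξ, ‖kernelTerm m lam φ t j x y ξ‖ ≤ b j)
    (horth : ∀ i j : ℕ, i ≠ j → ∫ z, φ i z * φ j z ∂m = 0) (hone : φ 0 = fun _ => 1)
    (x y : E) : ∫ ξ, tripleKernel m lam φ t x y ξ ∂m = Real.exp (-lam 0 * t) := by
  have hseries : HasSum (fun j => ∫ ξ, kernelTerm m lam φ t j x y ξ ∂m)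
      (∫ ξ, tripleKernel m lam φ t x y ξ ∂m) :=
    hasSum_integral_of_dominated_convergence (fun j _ => b j)
      (fun j => by unfold kernelTerm; fun_prop) (fun j => ae_of_all _ (hbound j x y))
      (ae_of_all _ fun _ => hb) (integrable_const _)
      (ae_of_all _ fun ξ => (hb.of_norm_bounded (hbound · x y ξ)).hasSum)
  rw [← hseries.tsum_eq, tsum_eq_single 0]
  · simp only [kernelTerm, hone, mul_one, one_pow, integral_const, smul_eq_mul,
      Real.sq_sqrt measureReal_nonneg]
    exact mul_div_cancel₀ _ (measureReal_univ_ne_zero (μ := m))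
  · intro j hj
    have hmean : ∫ ξ, φ j ξ ∂m = 0 := by simpa only [hone, one_mul] using horth 0 j (Ne.symm hj)
    simp only [kernelTerm, mul_div_right_comm _ (φ j _), integral_const_mul, hmean, mul_zero]

end Topology

end TripleKernel

theorem stmt_12_general {E : Type*} [MetricSpace E] [CompactSpace E] [MeasurableSpace E] [BorelSpace E]
    (m : Measure E) [IsFiniteMeasure m]
    (lam : ℕ → ℝ) (hlam : ∀ j, 0 ≤ lam j)
    (hsum : ∀ t : ℝ, 0 < t → Summable fun j => Real.exp (-lam j * t))
    (φ : ℕ → E → ℝ) (hφc : ∀ j, Continuous (φ j))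
    (hφpos : ∀ j, 0 < Real.sqrt (∫ z, (φ j z) ^ 2 ∂m))
    (hφbdd : ∃ M : ℝ, ∀ j, Real.sqrt (∫ z, (φ j z) ^ 2 ∂m) ≤ M)
    (hgrowth : ∀ ε : ℝ, 0 < ε → ∃ C : ℝ, ∀ (j : ℕ) (x : E),
      |φ j x| ≤ C * Real.exp (lam j * ε) * Real.sqrt (∫ z, (φ j z) ^ 2 ∂m))
    (horth : ∀ i j : ℕ, i ≠ j → ∫ z, φ i z * φ j z ∂m = 0)
    (hone : φ 0 = fun _ => 1)
    (hq : ∀ t : ℝ, 0 < t → ∀ x y ξ : E,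
      0 ≤ ∑' j, Real.exp (-lam j * t) * φ j x * φ j y * φ j ξ /
        Real.sqrt (∫ z, (φ j z) ^ 2 ∂m) ^ 2)
    (ν : E → E → Measure E)
    (hνlim : ∀ (x y : E) (f : E → ℝ), Continuous f →
      Tendsto (fun t : ℝ => ∫ ξ, f ξ *
          (∑' j, Real.exp (-lam j * t) * φ j x * φ j y * φ j ξ /
            Real.sqrt (∫ z, (φ j z) ^ 2 ∂m) ^ 2) ∂m)
        (nhdsWithin 0 (Set.Ioi 0)) (nhds (∫ ξ, f ξ ∂(ν x y)))) :
    ∀ (f : E → ℝ), Continuous f → ∀ x : E,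
      ∫ y, (∫ ξ, f ξ ∂(ν x y)) ∂m = ∫ ξ, f ξ ∂m := by
  intro f hf x
  obtain ⟨M, hM⟩ := hφbdd
  have : NeZero m := ⟨fun h => by
    simpa only [h, integral_zero_measure, Real.sqrt_zero, lt_self_iff_false] using hφpos 0⟩
  obtain ⟨B, hB⟩ := (isCompact_range hf).isBounded.exists_norm_le
  replace hB : ∀ ξ, ‖f ξ‖ ≤ B := fun ξ => hB (f ξ) ⟨ξ, rfl⟩
  have hkernel : ∀ t, 0 < t → Continuous (Function.uncurry (tripleKernel m lam φ t x)) ∧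
      ∀ y, ∫ ξ, tripleKernel m lam φ t x y ξ ∂m = Real.exp (-lam 0 * t) := fun t ht => by
    obtain ⟨b, hb, hbound⟩ := exists_summable_norm_kernelTerm_le ht hsum hφpos hM hgrowth
    exact ⟨continuous_tripleKernel hφc hb hbound x,
      integral_tripleKernel hφc hb hbound horth hone x⟩
  have hdom : ∀ t, 0 < t → ∀ y, ‖∫ ξ, f ξ * tripleKernel m lam φ t x y ξ ∂m‖ ≤ B :=
    fun t ht y => (norm_integral_mul_kernel_le (hkernel t ht).1 (hq t ht x) hB y).trans <| by
      rw [(hkernel t ht).2 y]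
      exact mul_le_of_le_one_right ((norm_nonneg _).trans (hB x)) <| Real.exp_le_one_iff.mpr <|
        mul_nonpos_of_nonpos_of_nonneg (neg_nonpos.mpr (hlam 0)) ht.le
  have hlim_ν : Tendsto (fun t => ∫ y, ∫ ξ, f ξ * tripleKernel m lam φ t x y ξ ∂m ∂m)
      (𝓝[>] 0) (𝓝 (∫ y, ∫ ξ, f ξ ∂(ν x y) ∂m)) :=
    tendsto_integral_filter_of_dominated_convergence (fun _ => B)
      (eventually_mem_nhdsWithin.mono fun t ht =>
        (continuous_integral_mul_kernel hf (hkernel t ht).1).aestronglyMeasurable)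
      (eventually_mem_nhdsWithin.mono fun t ht => ae_of_all _ (hdom t ht))
      (integrable_const B) (ae_of_all _ fun y => hνlim x y f hf)
  have hexp : Tendsto (fun t : ℝ => Real.exp (-lam 0 * t) * ∫ ξ, f ξ ∂m)
      (𝓝[>] 0) (𝓝 (∫ ξ, f ξ ∂m)) := by
    have hc : Continuous fun t : ℝ => Real.exp (-lam 0 * t) * ∫ ξ, f ξ ∂m := by fun_prop
    simpa using (hc.tendsto 0).mono_left nhdsWithin_le_nhds
  refine tendsto_nhds_unique hlim_ν (hexp.congr' (eventually_mem_nhdsWithin.mono fun t ht => ?_))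
  exact (integral_integral_mul_kernel hf (hkernel t ht).1
    fun ξ => by simpa only [tripleKernel_comm] using (hkernel t ht).2 ξ).symm

theorem stmt_12 {E : Type*} [MetricSpace E] [CompactSpace E] [MeasurableSpace E] [BorelSpace E]
    (m : Measure E) [IsFiniteMeasure m]
    (lam : ℕ → ℝ) (hlam : ∀ j, 0 ≤ lam j)
    (hsum : ∀ t : ℝ, 0 < t → Summable fun j => Real.exp (-lam j * t))
    (φ : ℕ → E → ℝ) (hφc : ∀ j, Continuous (φ j))
    (hφpos : ∀ j, 0 < Real.sqrt (∫ z, (φ j z) ^ 2 ∂m))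
    (hφbdd : ∃ M : ℝ, ∀ j, Real.sqrt (∫ z, (φ j z) ^ 2 ∂m) ≤ M)
    (hgrowth : ∀ ε : ℝ, 0 < ε → ∃ C : ℝ, ∀ (j : ℕ) (x : E),
      |φ j x| ≤ C * Real.exp (lam j * ε) * Real.sqrt (∫ z, (φ j z) ^ 2 ∂m))
    (horth : ∀ i j : ℕ, i ≠ j → ∫ z, φ i z * φ j z ∂m = 0)
    (hone : φ 0 = fun _ => 1)
    (hq : ∀ t : ℝ, 0 < t → ∀ x y ξ : E,
      0 ≤ ∑' j, Real.exp (-lam j * t) * φ j x * φ j y * φ j ξ /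
        Real.sqrt (∫ z, (φ j z) ^ 2 ∂m) ^ 2)
    (ν : E → E → Measure E) (hνprob : ∀ x y, IsProbabilityMeasure (ν x y))
    (hνlim : ∀ (x y : E) (f : E → ℝ), Continuous f →
      Tendsto (fun t : ℝ => ∫ ξ, f ξ *
          (∑' j, Real.exp (-lam j * t) * φ j x * φ j y * φ j ξ /
            Real.sqrt (∫ z, (φ j z) ^ 2 ∂m) ^ 2) ∂m)
        (nhdsWithin 0 (Set.Ioi 0)) (nhds (∫ ξ, f ξ ∂(ν x y)))) :
    ∀ (f : E → ℝ), Continuous f → ∀ x : E,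
      ∫ y, (∫ ξ, f ξ ∂(ν x y)) ∂m = ∫ ξ, f ξ ∂m :=
  stmt_12_general m lam hlam hsum φ hφc hφpos hφbdd hgrowth horth hone hq ν hνlim
end

section
/- Let 1 ≤ p ≤ ∞, let μ be a finite positive Borel measure on E and f ∈ L^p(E,m). Then the function (T^μ f)(x) := ∫_E ∫_E f(ξ) k(x,y)(dξ) μ(dy) is well defined for m-almost every x (and, up to m-null sets, does not depend on the choice of representative of f), is measurable, and satisfies ‖T^μ f‖_{L^p(E,m)} ≤ μ(E)·‖f‖_{L^p(E,m)}. -/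
/-!
Write `ρₓ := μ.bind (k x)`, a measure of total mass `μ(E)`, so that `|T^μ f (x)| ≤ ∫ |f| dρₓ`.
Symmetry of `k` turns the invariance of `m` into `∫ k(x, y) m(dx) = m` for every `y`, hence
`m.bind ρ = μ(E) • m`. Consequently `m`-null sets are `ρₓ`-null for `m`-a.e. `x`, which makes
`T^μ f` independent of the representative of `f`, and Jensen's inequality for the measures `ρₓ`
gives `∫ (∫ |f| dρₓ)^p dm ≤ μ(E)^(p-1) ∫ |f|^p d(m.bind ρ) = μ(E)^p ∫ |f|^p dm`.
-/

open MeasureTheory MeasureTheory.Measure ENNReal Function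

namespace MeasureTheory

lemma rpow_lintegral_le_mul_lintegral_rpow {α : Type*} [MeasurableSpace α] (ν : Measure α)
    {h : α → ℝ≥0∞} (hh : AEMeasurable h ν) {r : ℝ} (hr : 1 ≤ r) :
    (∫⁻ a, h a ∂ν) ^ r ≤ ν Set.univ ^ (r - 1) * ∫⁻ a, h a ^ r ∂ν := by
  rcases hr.eq_or_lt with rfl | hr
  · simp
  have hr₀ : 0 < r := zero_lt_one.trans hr
  have hpq := Real.HolderConjugate.conjExponent hr
  have holder := ENNReal.lintegral_mul_le_Lp_mul_Lq ν hpq hh (aemeasurable_const (b := 1))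
  simp only [Pi.mul_apply, mul_one, ENNReal.one_rpow, lintegral_one] at holder
  have := ENNReal.rpow_le_rpow holder hr₀.le
  rw [ENNReal.mul_rpow_of_nonneg _ _ hr₀.le, ← ENNReal.rpow_mul, ← ENNReal.rpow_mul,
    one_div, inv_mul_cancel₀ hr₀.ne', ENNReal.rpow_one, one_div, inv_mul_eq_div,
    hpq.div_conj_eq_sub_one] at this
  exact this.trans_eq (mul_comm _ _)

section MeasureFamily

variable {α γ : Type*} [MeasurableSpace α] [MeasurableSpace γ]
  {m : Measure α} {ν : Measure γ} {ρ : α → Measure γ} {c : ℝ≥0∞}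

lemma ae_lintegral_le_of_bind_le (hρ : Measurable ρ) (hmass : ∀ x, ρ x Set.univ ≤ c)
    (hbind : m.bind ρ ≤ c • ν) {h : γ → ℝ≥0∞} {C : ℝ≥0∞} (hC : ∀ᵐ z ∂ν, h z ≤ C) :
    ∀ᵐ x ∂m, ∫⁻ z, h z ∂ρ x ≤ c * C := by
  filter_upwards [ae_ae_of_ae_bind hρ.aemeasurable (ae_mono hbind (ae_smul_measure hC c))] with x hx
  calc ∫⁻ z, h z ∂ρ x ≤ ∫⁻ _, C ∂ρ x := lintegral_mono_ae hx
    _ = C * ρ x Set.univ := lintegral_const C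
    _ ≤ c * C := by rw [mul_comm]; gcongr; exact hmass x

lemma lintegral_rpow_lintegral_le_of_bind_le (hρ : Measurable ρ) (hmass : ∀ x, ρ x Set.univ ≤ c)
    (hbind : m.bind ρ ≤ c • ν) {h : γ → ℝ≥0∞} (hh : Measurable h) {r : ℝ} (hr : 1 ≤ r) :
    ∫⁻ x, (∫⁻ z, h z ∂ρ x) ^ r ∂m ≤ c ^ r * ∫⁻ z, h z ^ r ∂ν := by
  have hhr : Measurable fun z => h z ^ r := hh.pow_const r
  have hρhr : Measurable fun x => ∫⁻ z, h z ^ r ∂ρ x := (measurable_lintegral hhr).comp hρ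
  calc ∫⁻ x, (∫⁻ z, h z ∂ρ x) ^ r ∂m
      ≤ ∫⁻ x, c ^ (r - 1) * ∫⁻ z, h z ^ r ∂ρ x ∂m := by
        refine lintegral_mono fun x => ?_
        refine (rpow_lintegral_le_mul_lintegral_rpow _ hh.aemeasurable hr).trans ?_
        gcongr
        exact hmass x
    _ = c ^ (r - 1) * ∫⁻ z, h z ^ r ∂m.bind ρ := by
        rw [lintegral_const_mul _ hρhr, lintegral_bind hρ.aemeasurable hhr.aemeasurable]
    _ ≤ c ^ (r - 1) * (c * ∫⁻ z, h z ^ r ∂ν) := by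
        gcongr
        exact (lintegral_mono' hbind le_rfl).trans_eq (lintegral_smul_measure c _)
    _ = c ^ r * ∫⁻ z, h z ^ r ∂ν := by
        nth_rw 2 [← ENNReal.rpow_one c]
        rw [← mul_assoc, ← ENNReal.rpow_add_of_nonneg _ _ (by linarith) zero_le_one,
          sub_add_cancel]

lemma eLpNorm_lintegral_le_of_bind_le (hρ : Measurable ρ) (hmass : ∀ x, ρ x Set.univ ≤ c)
    (hbind : m.bind ρ ≤ c • ν) {h : γ → ℝ≥0∞} (hh : Measurable h) {p : ℝ≥0∞} (hp : 1 ≤ p) :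
    eLpNorm (fun x => ∫⁻ z, h z ∂ρ x) p m ≤ c * eLpNorm h p ν := by
  rcases eq_or_ne p ∞ with rfl | hp_top
  · simp only [eLpNorm_exponent_top]
    have := ae_lintegral_le_of_bind_le hρ hmass hbind (ae_le_eLpNormEssSup (f := h) (μ := ν))
    simp only [enorm_eq_self] at this
    exact essSup_le_of_ae_le _ this
  have hp₀ : p ≠ 0 := (zero_lt_one.trans_le hp).ne'
  have hr : 1 ≤ p.toReal := by simpa using ENNReal.toReal_mono hp_top hp
  have hr₀ : 0 < p.toReal := zero_lt_one.trans_le hr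
  simp only [eLpNorm_eq_lintegral_rpow_enorm_toReal hp₀ hp_top, enorm_eq_self]
  calc (∫⁻ x, (∫⁻ z, h z ∂ρ x) ^ p.toReal ∂m) ^ (1 / p.toReal)
      ≤ (c ^ p.toReal * ∫⁻ z, h z ^ p.toReal ∂ν) ^ (1 / p.toReal) := by
        gcongr
        exact lintegral_rpow_lintegral_le_of_bind_le hρ hmass hbind hh hr
    _ = c * (∫⁻ z, h z ^ p.toReal ∂ν) ^ (1 / p.toReal) := by
        rw [ENNReal.mul_rpow_of_nonneg _ _ (by positivity), ← ENNReal.rpow_mul,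
          mul_one_div_cancel hr₀.ne', ENNReal.rpow_one]

end MeasureFamily

section KernelFamily

variable {α β γ F : Type*} [MeasurableSpace α] [MeasurableSpace β] [MeasurableSpace γ]
  [NormedAddCommGroup F] [NormedSpace ℝ F]
  {k : α → β → Measure γ} {m : Measure α} {μ : Measure β} {ν : Measure γ}

lemma measurable_bind_of_measurable_uncurry [SFinite μ] (hk : Measurable (uncurry k)) :
    Measurable fun x => μ.bind (k x) := by
  refine measurable_of_measurable_coe _ fun B hB => ?_
  simp_rw [bind_apply hB hk.of_uncurry_left.aemeasurable]
  exact ((measurable_coe hB).comp hk).lintegral_prod_right'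

lemma bind_apply_univ_of_isProbabilityMeasure {f : β → Measure γ} (hf : AEMeasurable f μ)
    (hprob : ∀ y, IsProbabilityMeasure (f y)) : μ.bind f Set.univ = μ Set.univ := by
  simp [bind_apply MeasurableSet.univ hf]

lemma bind_bind_eq_smul [SFinite m] [SFinite μ] (hk : Measurable (uncurry k))
    (hbind : ∀ y, m.bind (fun x => k x y) = ν) :
    m.bind (fun x => μ.bind (k x)) = μ Set.univ • ν := by
  ext B hB
  have hkB : Measurable fun q : α × β => k q.1 q.2 B := (measurable_coe hB).comp hk
  rw [bind_apply hB (measurable_bind_of_measurable_uncurry hk).aemeasurable]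
  simp_rw [bind_apply hB hk.of_uncurry_left.aemeasurable]
  rw [lintegral_lintegral_swap hkB.aemeasurable]
  simp_rw [← bind_apply hB hk.of_uncurry_right.aemeasurable, hbind]
  simp [mul_comm]

lemma ae_ae_ae_of_ae [SFinite m] [SFinite μ] (hk : Measurable (uncurry k))
    (hbind : ∀ y, m.bind (fun x => k x y) = ν) {P : γ → Prop} (hP : ∀ᵐ z ∂ν, P z) :
    ∀ᵐ x ∂m, ∀ᵐ y ∂μ, ∀ᵐ z ∂k x y, P z := by
  have hP' : ∀ᵐ z ∂m.bind (fun x => μ.bind (k x)), P z := by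
    rw [bind_bind_eq_smul hk hbind]
    exact ae_smul_measure hP _
  have hρ := measurable_bind_of_measurable_uncurry (μ := μ) hk
  filter_upwards [ae_ae_of_ae_bind hρ.aemeasurable hP'] with x hx
  exact ae_ae_of_ae_bind hk.of_uncurry_left.aemeasurable hx

lemma integral_integral_congr_ae [SFinite m] [SFinite μ] (hk : Measurable (uncurry k))
    (hbind : ∀ y, m.bind (fun x => k x y) = ν) {f g : γ → F} (hfg : f =ᵐ[ν] g) :
    (fun x => ∫ y, ∫ z, f z ∂k x y ∂μ) =ᵐ[m] fun x => ∫ y, ∫ z, g z ∂k x y ∂μ := by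
  filter_upwards [ae_ae_ae_of_ae (μ := μ) hk hbind hfg] with x hx
  exact integral_congr_ae (hx.mono fun y hy => integral_congr_ae hy)

lemma stronglyMeasurable_integral_uncurry (hk : Measurable (uncurry k))
    (hkprob : ∀ x y, IsProbabilityMeasure (k x y)) {f : γ → F} (hf : StronglyMeasurable f) :
    StronglyMeasurable fun q : α × β => ∫ z, f z ∂k q.1 q.2 :=
  let κ : ProbabilityTheory.Kernel (α × β) γ := ⟨uncurry k, hk⟩
  have : ProbabilityTheory.IsMarkovKernel κ := ⟨fun q => hkprob q.1 q.2⟩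
  (hf.comp_measurable measurable_snd).integral_kernel_prod_right' (κ := κ)

lemma aestronglyMeasurable_integral_integral [SFinite m] [SFinite μ]
    (hk : Measurable (uncurry k)) (hkprob : ∀ x y, IsProbabilityMeasure (k x y))
    (hbind : ∀ y, m.bind (fun x => k x y) = ν) {f : γ → F} (hf : AEStronglyMeasurable f ν) :
    AEStronglyMeasurable (fun x => ∫ y, ∫ z, f z ∂k x y ∂μ) m :=
  (stronglyMeasurable_integral_uncurry hk hkprob hf.stronglyMeasurable_mk).integral_prod_right'
    |>.aestronglyMeasurable.congr (integral_integral_congr_ae hk hbind hf.ae_eq_mk).symm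

lemma enorm_integral_integral_le_lintegral_bind (hk : Measurable (uncurry k))
    {f : γ → F} (hf : StronglyMeasurable f) (x : α) :
    ‖∫ y, ∫ z, f z ∂k x y ∂μ‖ₑ ≤ ∫⁻ z, ‖f z‖ₑ ∂μ.bind (k x) := by
  rw [lintegral_bind hk.of_uncurry_left.aemeasurable hf.enorm.aemeasurable]
  exact (enorm_integral_le_lintegral_enorm _).trans
    (lintegral_mono fun y => enorm_integral_le_lintegral_enorm _)

lemma eLpNorm_integral_integral_le_of_stronglyMeasurable [SFinite m] [SFinite μ]
    (hk : Measurable (uncurry k)) (hkprob : ∀ x y, IsProbabilityMeasure (k x y))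
    (hbind : ∀ y, m.bind (fun x => k x y) = ν) {f : γ → F} (hf : StronglyMeasurable f)
    {p : ℝ≥0∞} (hp : 1 ≤ p) :
    eLpNorm (fun x => ∫ y, ∫ z, f z ∂k x y ∂μ) p m ≤ μ Set.univ * eLpNorm f p ν := by
  have hρ := measurable_bind_of_measurable_uncurry (μ := μ) hk
  have hmass x : μ.bind (k x) Set.univ ≤ μ Set.univ :=
    (bind_apply_univ_of_isProbabilityMeasure hk.of_uncurry_left.aemeasurable (hkprob x)).le
  calc eLpNorm (fun x => ∫ y, ∫ z, f z ∂k x y ∂μ) p m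
      ≤ eLpNorm (fun x => ∫⁻ z, ‖f z‖ₑ ∂μ.bind (k x)) p m :=
        eLpNorm_mono_enorm fun x => by
          simpa only [enorm_eq_self] using enorm_integral_integral_le_lintegral_bind hk hf x
    _ ≤ μ Set.univ * eLpNorm (fun z => ‖f z‖ₑ) p ν :=
        eLpNorm_lintegral_le_of_bind_le hρ hmass (bind_bind_eq_smul hk hbind).le hf.enorm hp
    _ = μ Set.univ * eLpNorm f p ν := by rw [eLpNorm_enorm]

lemma eLpNorm_integral_integral_le [SFinite m] [SFinite μ] (hk : Measurable (uncurry k))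
    (hkprob : ∀ x y, IsProbabilityMeasure (k x y)) (hbind : ∀ y, m.bind (fun x => k x y) = ν)
    {f : γ → F} (hf : AEStronglyMeasurable f ν) {p : ℝ≥0∞} (hp : 1 ≤ p) :
    eLpNorm (fun x => ∫ y, ∫ z, f z ∂k x y ∂μ) p m ≤ μ Set.univ * eLpNorm f p ν := by
  rw [eLpNorm_congr_ae (integral_integral_congr_ae hk hbind hf.ae_eq_mk),
    eLpNorm_congr_ae hf.ae_eq_mk]
  exact eLpNorm_integral_integral_le_of_stronglyMeasurable hk hkprob hbind
    hf.stronglyMeasurable_mk hp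

lemma ae_integrable_integral [SFinite m] [IsFiniteMeasure μ] (hk : Measurable (uncurry k))
    (hkprob : ∀ x y, IsProbabilityMeasure (k x y)) (hbind : ∀ y, m.bind (fun x => k x y) = ν)
    {f : γ → F} (hf : Integrable f ν) :
    ∀ᵐ x ∂m, Integrable (fun y => ∫ z, f z ∂k x y) μ := by
  have hρ := measurable_bind_of_measurable_uncurry (μ := μ) hk
  have hf₀ := hf.1.stronglyMeasurable_mk
  have hfin : ∀ᵐ x ∂m, ∫⁻ z, ‖hf.1.mk f z‖ₑ ∂μ.bind (k x) < ∞ := by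
    refine ae_lt_top ((measurable_lintegral hf₀.enorm).comp hρ) ?_
    rw [← lintegral_bind hρ.aemeasurable hf₀.enorm.aemeasurable, bind_bind_eq_smul hk hbind,
      lintegral_smul_measure]
    exact mul_ne_top (measure_ne_top μ _) (hf.congr hf.1.ae_eq_mk).2.ne
  filter_upwards [hfin, ae_ae_ae_of_ae (μ := μ) hk hbind hf.1.ae_eq_mk] with x hfin hx
  refine Integrable.congr ⟨?_, ?_⟩ (hx.mono fun y hy => (integral_congr_ae hy).symm)
  · exact ((stronglyMeasurable_integral_uncurry hk hkprob hf₀).comp_measurable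
      measurable_prodMk_left).aestronglyMeasurable
  · rw [lintegral_bind hk.of_uncurry_left.aemeasurable hf₀.enorm.aemeasurable] at hfin
    exact (lintegral_mono fun y => enorm_integral_le_lintegral_enorm _).trans_lt hfin

end KernelFamily

lemma bind_eq_self_of_symm {α : Type*} [MeasurableSpace α] {m : Measure α}
    {k : α → α → Measure α} (hk : Measurable (uncurry k)) (hsymm : ∀ x y, k x y = k y x)
    (hinv : ∀ x B, MeasurableSet B → ∫⁻ y, k x y B ∂m = m B) (y : α) :
    m.bind (fun x => k x y) = m := by
  ext B hB
  rw [bind_apply hB hk.of_uncurry_right.aemeasurable]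
  simp_rw [hsymm _ y]
  exact hinv y B hB

end MeasureTheory

theorem stmt_13_general {E : Type*} [MeasurableSpace E]
    (m : Measure E) [IsFiniteMeasure m]
    (k : E → E → Measure E) (hkprob : ∀ x y, IsProbabilityMeasure (k x y))
    (hkmeas : Measurable (fun p : E × E => k p.1 p.2))
    (hksymm : ∀ x y, k x y = k y x)
    (hkinv : ∀ (x : E) (B : Set E), MeasurableSet B → ∫⁻ y, k x y B ∂m = m B)
    (p : ℝ≥0∞) (hp : 1 ≤ p)
    (μ : Measure E) [IsFiniteMeasure μ]
    (f : E → ℝ) (hf : MemLp f p m) :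
    (∀ᵐ x ∂m, Integrable (fun y => ∫ ξ, f ξ ∂(k x y)) μ) ∧
    AEStronglyMeasurable (fun x => ∫ y, (∫ ξ, f ξ ∂(k x y)) ∂μ) m ∧
    (∀ f' : E → ℝ, f =ᵐ[m] f' →
      (fun x => ∫ y, (∫ ξ, f ξ ∂(k x y)) ∂μ) =ᵐ[m]
        (fun x => ∫ y, (∫ ξ, f' ξ ∂(k x y)) ∂μ)) ∧
    eLpNorm (fun x => ∫ y, (∫ ξ, f ξ ∂(k x y)) ∂μ) p m ≤ μ Set.univ * eLpNorm f p m := by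
  have hbind := bind_eq_self_of_symm hkmeas hksymm hkinv
  exact ⟨ae_integrable_integral hkmeas hkprob hbind (hf.integrable hp),
    aestronglyMeasurable_integral_integral hkmeas hkprob hbind hf.1,
    fun _ hff' => integral_integral_congr_ae hkmeas hbind hff',
    eLpNorm_integral_integral_le hkmeas hkprob hbind hf.1 hp⟩

theorem stmt_13 {E : Type*} [MetricSpace E] [CompactSpace E] [MeasurableSpace E] [BorelSpace E]
    (m : Measure E) [IsFiniteMeasure m]
    (k : E → E → Measure E) (hkprob : ∀ x y, IsProbabilityMeasure (k x y))
    (hkmeas : Measurable (fun p : E × E => k p.1 p.2))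
    (hksymm : ∀ x y, k x y = k y x)
    (hkinv : ∀ (x : E) (B : Set E), MeasurableSet B → ∫⁻ y, k x y B ∂m = m B)
    (p : ℝ≥0∞) (hp : 1 ≤ p)
    (μ : Measure E) [IsFiniteMeasure μ]
    (f : E → ℝ) (hf : MemLp f p m) :
    (∀ᵐ x ∂m, Integrable (fun y => ∫ ξ, f ξ ∂(k x y)) μ) ∧
    AEStronglyMeasurable (fun x => ∫ y, (∫ ξ, f ξ ∂(k x y)) ∂μ) m ∧
    (∀ f' : E → ℝ, f =ᵐ[m] f' →
      (fun x => ∫ y, (∫ ξ, f ξ ∂(k x y)) ∂μ) =ᵐ[m]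
        (fun x => ∫ y, (∫ ξ, f' ξ ∂(k x y)) ∂μ)) ∧
    eLpNorm (fun x => ∫ y, (∫ ξ, f ξ ∂(k x y)) ∂μ) p m ≤ μ Set.univ * eLpNorm f p m :=
  stmt_13_general m k hkprob hkmeas hksymm hkinv p hp μ f hf
end

section
/- Let p₁, p₂ ∈ [1,∞] with 1/p₁ + 1/p₂ ≥ 1 and define r ∈ [1,∞] by 1/r = 1/p₁ + 1/p₂ − 1. For f ∈ L^{p₁}(E,m) and h ∈ L^{p₂}(E,m), the generalized convolution (f ⋄ h)(x) := ∫_E (T^y f)(x) h(y) m(dy) is well defined for m-almost every x, and f ⋄ h ∈ L^r(E,m) with ‖f ⋄ h‖_{L^r(E,m)} ≤ ‖f‖_{L^{p₁}(E,m)} · ‖h‖_{L^{p₂}(E,m)}. -/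
/-!
Put `F x y := T^y |f| (x) = ∫ |f| d k(x,y)`, so that `|f ⋄ h| (x) ≤ ∫ F x y |h y| m(dy)`.
By Jensen's inequality and the invariance of `m`, each generalized translation is a contraction
of `L^p₁`; by symmetry of `k` this bounds every row `F x ·` and every column `F · y` in `L^p₁` by
`‖f‖_p₁`. Young's inequality for integral kernels whose rows and columns are uniformly bounded in
`L^p₁` (a three-factor Hölder inequality in `y`, then Fubini) gives the `L^r` bound, and finiteness
of that norm gives the almost everywhere integrability.
-/

open MeasureTheory ENNReal ProbabilityTheory

section Kernels

variable {α β γ : Type*} [MeasurableSpace α] [MeasurableSpace β] [MeasurableSpace γ]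
  {μ : Measure α} {ν : Measure β} {ρ : Measure γ}

theorem ne_zero_of_one_div_add_one_eq {p q r : ℝ≥0∞} (hp : 1 ≤ p) (hq : 1 ≤ q)
    (hpqr : 1 / r + 1 = 1 / p + 1 / q) : r ≠ 0 := by
  rintro rfl
  simp only [one_div, ENNReal.inv_zero, top_add] at hpqr
  exact add_ne_top.mpr ⟨inv_ne_top.mpr (zero_lt_one.trans_le hp).ne',
    inv_ne_top.mpr (zero_lt_one.trans_le hq).ne'⟩ hpqr.symm

theorem lintegral_rpow_le_of_eLpNorm_le {f : α → ℝ≥0∞} {p : ℝ≥0∞} (hp0 : p ≠ 0) (hp : p ≠ ∞)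
    {M : ℝ≥0∞} (h : eLpNorm f p μ ≤ M) : ∫⁻ a, f a ^ p.toReal ∂μ ≤ M ^ p.toReal := by
  rwa [eLpNorm_eq_lintegral_rpow_enorm_toReal hp0 hp, one_div,
    rpow_inv_le_iff (toReal_pos hp0 hp)] at h

theorem ae_lt_top_of_eLpNorm_lt_top {f : α → ℝ≥0∞} (hf : AEMeasurable f μ) {p : ℝ≥0∞}
    (hp : p ≠ 0) (h : eLpNorm f p μ < ∞) : ∀ᵐ a ∂μ, f a < ∞ := by
  rcases eq_or_ne p ∞ with rfl | hp_top
  · rw [eLpNorm_exponent_top] at h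
    exact (enorm_ae_le_eLpNormEssSup f μ).mono fun a ha => ha.trans_lt h
  have hP := toReal_pos hp hp_top
  rw [eLpNorm_eq_lintegral_rpow_enorm_toReal hp hp_top, rpow_lt_top_iff_of_pos (by positivity)] at h
  filter_upwards [ae_lt_top' (hf.pow_const _) h.ne] with a ha
  exact (rpow_lt_top_iff_of_pos hP).mp ha

theorem rpow_lintegral_le_lintegral_rpow [IsProbabilityMeasure μ] {f : α → ℝ≥0∞}
    (hf : AEMeasurable f μ) {p : ℝ} (hp : 1 ≤ p) :
    (∫⁻ a, f a ∂μ) ^ p ≤ ∫⁻ a, f a ^ p ∂μ := by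
  have hp0 : 0 < p := zero_lt_one.trans_le hp
  have h := eLpNorm_le_eLpNorm_of_exponent_le (μ := μ) (p := 1) (q := ENNReal.ofReal p)
    (by simpa using hp) hf.aestronglyMeasurable
  rw [eLpNorm_one_eq_lintegral_enorm, eLpNorm_eq_lintegral_rpow_enorm_toReal (by simp [hp0])
    ofReal_ne_top, toReal_ofReal hp0.le, one_div] at h
  exact (le_rpow_inv_iff hp0).mp h

theorem lintegral_mul_le_eLpNorm_mul_eLpNorm {p q : ℝ≥0∞} [p.HolderConjugate q]
    {f g : α → ℝ≥0∞} (hf : AEMeasurable f μ) (hg : AEMeasurable g μ) :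
    ∫⁻ a, f a * g a ∂μ ≤ eLpNorm f p μ * eLpNorm g q μ := by
  have top_one : ∀ {u v : α → ℝ≥0∞}, AEMeasurable v μ →
      ∫⁻ a, u a * v a ∂μ ≤ eLpNorm u ∞ μ * eLpNorm v 1 μ := fun hv => by
    rw [eLpNorm_exponent_top, eLpNorm_one_eq_lintegral_enorm]
    simp only [enorm_eq_self]
    rw [← lintegral_const_mul'' _ hv]
    exact lintegral_mono_ae <| (enorm_ae_le_eLpNormEssSup _ μ).mono fun a ha => by gcongr; exact ha
  rcases eq_or_ne p ∞ with rfl | hp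
  · obtain rfl : q = 1 := (HolderConjugate.eq_top_iff_eq_one ∞ q).mp rfl
    exact top_one hg
  rcases eq_or_ne q ∞ with rfl | hq
  · obtain rfl : p = 1 := (HolderConjugate.eq_top_iff_eq_one ∞ p).mp rfl
    simpa only [mul_comm] using top_one (u := g) hf
  rw [eLpNorm_eq_lintegral_rpow_enorm_toReal (HolderConjugate.ne_zero p q) hp,
    eLpNorm_eq_lintegral_rpow_enorm_toReal (HolderConjugate.ne_zero q p) hq]
  exact ENNReal.lintegral_mul_le_Lp_mul_Lq μ (HolderConjugate.toReal_of_ne_top hp hq) hf hg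

theorem lintegral_mul_le_three_factor_holder {P Q R : ℝ} (hP : 1 ≤ P) (hQ : 1 ≤ Q) (hR : 0 < R)
    (hPQR : 1 / R + 1 = 1 / P + 1 / Q) {u v : α → ℝ≥0∞} (hu : AEMeasurable u μ)
    (hv : AEMeasurable v μ) :
    ∫⁻ a, u a * v a ∂μ ≤ (∫⁻ a, u a ^ P * v a ^ Q ∂μ) ^ (1 / R) *
      (∫⁻ a, u a ^ P ∂μ) ^ (1 / P - 1 / R) * (∫⁻ a, v a ^ Q ∂μ) ^ (1 / Q - 1 / R) := by
  have hP0 : 0 < P := zero_lt_one.trans_le hP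
  have hQ0 : 0 < Q := zero_lt_one.trans_le hQ
  have hb : 0 ≤ 1 / P - 1 / R := by linarith [(div_le_one hQ0).mpr hQ]
  have hc : 0 ≤ 1 / Q - 1 / R := by linarith [(div_le_one hP0).mpr hP]
  have split : ∀ s t : ℝ≥0∞, s * t =
      (s ^ P * t ^ Q) ^ (1 / R) * (s ^ P) ^ (1 / P - 1 / R) * (t ^ Q) ^ (1 / Q - 1 / R) := by
    intro s t
    rw [mul_rpow_of_nonneg _ _ (by positivity), ← rpow_mul, ← rpow_mul, ← rpow_mul, ← rpow_mul]
    have hPexp : P * (1 / R) + P * (1 / P - 1 / R) = 1 := by field_simp; ring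
    have hQexp : Q * (1 / R) + Q * (1 / Q - 1 / R) = 1 := by field_simp; ring
    calc s * t
        = s ^ (P * (1 / R) + P * (1 / P - 1 / R)) * t ^ (Q * (1 / R) + Q * (1 / Q - 1 / R)) := by
          rw [hPexp, hQexp, rpow_one, rpow_one]
      _ = _ := by
          rw [rpow_add_of_nonneg _ _ (by positivity) (mul_nonneg hP0.le hb),
            rpow_add_of_nonneg _ _ (by positivity) (mul_nonneg hQ0.le hc)]
          ring
  calc ∫⁻ a, u a * v a ∂μ
      = ∫⁻ a, ∏ i : Fin 3, (![fun a => u a ^ P * v a ^ Q, fun a => u a ^ P, fun a => v a ^ Q] i a)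
          ^ (![1 / R, 1 / P - 1 / R, 1 / Q - 1 / R] i) ∂μ := by
        simp only [Fin.prod_univ_three, Matrix.cons_val_zero, Matrix.cons_val_one,
          Matrix.cons_val_two, Matrix.head_cons, Matrix.tail_cons]
        exact lintegral_congr fun a => split (u a) (v a)
    _ ≤ ∏ i : Fin 3,
          (∫⁻ a, ![fun a => u a ^ P * v a ^ Q, fun a => u a ^ P, fun a => v a ^ Q] i a ∂μ)
          ^ (![1 / R, 1 / P - 1 / R, 1 / Q - 1 / R] i) := by
        refine lintegral_prod_norm_pow_le _ (fun i _ => ?_) ?_ (fun i _ => ?_)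
        · fin_cases i
          exacts [(hu.pow_const P).mul (hv.pow_const Q), hu.pow_const P, hv.pow_const Q]
        · simp only [Fin.sum_univ_three, Matrix.cons_val_zero, Matrix.cons_val_one,
            Matrix.cons_val_two, Matrix.head_cons, Matrix.tail_cons]
          linarith
        · fin_cases i
          exacts [one_div_nonneg.mpr hR.le, hb, hc]
    _ = _ := by
        simp only [Fin.prod_univ_three, Matrix.cons_val_zero, Matrix.cons_val_one,
          Matrix.cons_val_two, Matrix.head_cons, Matrix.tail_cons]

theorem eLpNorm_lintegral_kernel_le {κ : Kernel α β} [IsMarkovKernel κ] (hκ : κ ∘ₘ μ = ν)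
    {f : β → ℝ≥0∞} (hf : Measurable f) {p : ℝ≥0∞} (hp : 1 ≤ p) :
    eLpNorm (fun a => ∫⁻ b, f b ∂κ a) p μ ≤ eLpNorm f p ν := by
  subst hκ
  rcases eq_or_ne p ∞ with rfl | hp_top
  · rw [eLpNorm_exponent_top, eLpNormEssSup]
    refine essSup_le_of_ae_le _ ?_
    filter_upwards [Measure.ae_ae_of_ae_comp (enorm_ae_le_eLpNormEssSup f (κ ∘ₘ μ))] with a ha
    calc ∫⁻ b, f b ∂κ a ≤ ∫⁻ _, eLpNormEssSup f (κ ∘ₘ μ) ∂κ a := lintegral_mono_ae ha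
      _ = eLpNormEssSup f (κ ∘ₘ μ) := by simp
  have hp0 : p ≠ 0 := (zero_lt_one.trans_le hp).ne'
  have hP : 1 ≤ p.toReal := by simpa using toReal_mono hp_top hp
  rw [eLpNorm_eq_lintegral_rpow_enorm_toReal hp0 hp_top,
    eLpNorm_eq_lintegral_rpow_enorm_toReal hp0 hp_top]
  gcongr ?_ ^ _
  calc ∫⁻ a, (∫⁻ b, f b ∂κ a) ^ p.toReal ∂μ
      ≤ ∫⁻ a, ∫⁻ b, f b ^ p.toReal ∂κ a ∂μ :=
        lintegral_mono fun a => rpow_lintegral_le_lintegral_rpow hf.aemeasurable hP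
    _ = ∫⁻ b, f b ^ p.toReal ∂(κ ∘ₘ μ) :=
        (Measure.lintegral_bind κ.aemeasurable (hf.pow_const _).aemeasurable).symm

theorem ae_eq_integral_kernel_of_ae_eq_comp {E : Type*} [NormedAddCommGroup E] [NormedSpace ℝ E]
    {κ : Kernel α β} {f g : β → E} (h : f =ᵐ[κ ∘ₘ μ] g) :
    (fun a => ∫ b, f b ∂κ a) =ᵐ[μ] fun a => ∫ b, g b ∂κ a :=
  (Measure.ae_ae_of_ae_comp h).mono fun _ ha => integral_congr_ae ha

theorem lintegral_rpow_lintegral_mul_le [SFinite μ] [SFinite ν] {K : α → β → ℝ≥0∞}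
    (hK : Measurable (Function.uncurry K)) {g : β → ℝ≥0∞} (hg : Measurable g) {P Q R : ℝ}
    (hP : 1 ≤ P) (hQ : 1 ≤ Q) (hR : 0 < R) (hPQR : 1 / R + 1 = 1 / P + 1 / Q) {A : ℝ≥0∞}
    (hrow : ∀ a, ∫⁻ b, K a b ^ P ∂ν ≤ A) (hcol : ∀ b, ∫⁻ a, K a b ^ P ∂μ ≤ A) :
    ∫⁻ a, (∫⁻ b, K a b * g b ∂ν) ^ R ∂μ ≤ A ^ (R / P) * (∫⁻ b, g b ^ Q ∂ν) ^ (R / Q) := by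
  set B := ∫⁻ b, g b ^ Q ∂ν
  have hP0 : 0 < P := zero_lt_one.trans_le hP
  have hQ0 : 0 < Q := zero_lt_one.trans_le hQ
  have hb : 0 ≤ 1 / P - 1 / R := by linarith [(div_le_one hQ0).mpr hQ]
  have hc : 0 ≤ 1 / Q - 1 / R := by linarith [(div_le_one hP0).mpr hP]
  have hKP : Measurable fun x : α × β => K x.1 x.2 ^ P * g x.2 ^ Q :=
    (hK.pow_const P).mul ((hg.comp measurable_snd).pow_const Q)
  have pointwise : ∀ a, (∫⁻ b, K a b * g b ∂ν) ^ R ≤ (∫⁻ b, K a b ^ P * g b ^ Q ∂ν) *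
      (A ^ ((1 / P - 1 / R) * R) * B ^ ((1 / Q - 1 / R) * R)) := by
    intro a
    calc (∫⁻ b, K a b * g b ∂ν) ^ R
        ≤ ((∫⁻ b, K a b ^ P * g b ^ Q ∂ν) ^ (1 / R) * (∫⁻ b, K a b ^ P ∂ν) ^ (1 / P - 1 / R)
            * B ^ (1 / Q - 1 / R)) ^ R := by
          gcongr
          exact lintegral_mul_le_three_factor_holder hP hQ hR hPQR
            (hK.comp measurable_prodMk_left).aemeasurable hg.aemeasurable
      _ ≤ ((∫⁻ b, K a b ^ P * g b ^ Q ∂ν) ^ (1 / R) * A ^ (1 / P - 1 / R)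
            * B ^ (1 / Q - 1 / R)) ^ R := by
          gcongr
          exact hrow a
      _ = _ := by
          rw [mul_rpow_of_nonneg _ _ hR.le, mul_rpow_of_nonneg _ _ hR.le, ← rpow_mul, ← rpow_mul,
            ← rpow_mul, one_div_mul_cancel hR.ne', rpow_one, mul_assoc]
  have total : ∫⁻ a, ∫⁻ b, K a b ^ P * g b ^ Q ∂ν ∂μ ≤ A * B := by
    rw [lintegral_lintegral_swap hKP.aemeasurable]
    calc ∫⁻ b, ∫⁻ a, K a b ^ P * g b ^ Q ∂μ ∂ν = ∫⁻ b, (∫⁻ a, K a b ^ P ∂μ) * g b ^ Q ∂ν :=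
          lintegral_congr fun b =>
            lintegral_mul_const _ ((hK.comp measurable_prodMk_right).pow_const P)
      _ ≤ ∫⁻ b, A * g b ^ Q ∂ν := by gcongr with b; exact hcol b
      _ = A * B := lintegral_const_mul _ (hg.pow_const Q)
  have hexpP : R / P = 1 + (1 / P - 1 / R) * R := by field_simp; ring
  have hexpQ : R / Q = 1 + (1 / Q - 1 / R) * R := by field_simp; ring
  calc ∫⁻ a, (∫⁻ b, K a b * g b ∂ν) ^ R ∂μ
      ≤ ∫⁻ a, (∫⁻ b, K a b ^ P * g b ^ Q ∂ν) *
          (A ^ ((1 / P - 1 / R) * R) * B ^ ((1 / Q - 1 / R) * R)) ∂μ := lintegral_mono pointwise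
    _ = (∫⁻ a, ∫⁻ b, K a b ^ P * g b ^ Q ∂ν ∂μ) *
          (A ^ ((1 / P - 1 / R) * R) * B ^ ((1 / Q - 1 / R) * R)) :=
        lintegral_mul_const _ hKP.lintegral_prod_right'
    _ ≤ A * B * (A ^ ((1 / P - 1 / R) * R) * B ^ ((1 / Q - 1 / R) * R)) := by gcongr
    _ = A ^ (R / P) * B ^ (R / Q) := by
        rw [hexpP, hexpQ, rpow_add_of_nonneg _ _ zero_le_one (by positivity),
          rpow_add_of_nonneg _ _ zero_le_one (by positivity), rpow_one, rpow_one]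
        ring

theorem eLpNorm_lintegral_mul_le_of_holderConjugate {K : α → β → ℝ≥0∞}
    (hK : ∀ a, AEMeasurable (K a) ν) {g : β → ℝ≥0∞} (hg : AEMeasurable g ν) {p q : ℝ≥0∞}
    [p.HolderConjugate q] {M : ℝ≥0∞} (hrow : ∀ a, eLpNorm (K a) p ν ≤ M) :
    eLpNorm (fun a => ∫⁻ b, K a b * g b ∂ν) ∞ μ ≤ M * eLpNorm g q ν := by
  rw [eLpNorm_exponent_top]
  refine essSup_le_of_ae_le _ (ae_of_all _ fun a => ?_)
  calc ∫⁻ b, K a b * g b ∂ν ≤ eLpNorm (K a) p ν * eLpNorm g q ν :=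
        lintegral_mul_le_eLpNorm_mul_eLpNorm (hK a) hg
    _ ≤ M * eLpNorm g q ν := by gcongr; exact hrow a

theorem eLpNorm_lintegral_mul_le_of_ne_top [SFinite μ] [SFinite ν] {K : α → β → ℝ≥0∞}
    (hK : Measurable (Function.uncurry K)) {g : β → ℝ≥0∞} (hg : Measurable g) {p q r : ℝ≥0∞}
    (hp : 1 ≤ p) (hq : 1 ≤ q) (hr : r ≠ ∞) (hpqr : 1 / r + 1 = 1 / p + 1 / q) {M : ℝ≥0∞}
    (hrow : ∀ a, eLpNorm (K a) p ν ≤ M) (hcol : ∀ b, eLpNorm (fun a => K a b) p μ ≤ M) :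
    eLpNorm (fun a => ∫⁻ b, K a b * g b ∂ν) r μ ≤ M * eLpNorm g q ν := by
  have ne_top : ∀ {s t : ℝ≥0∞}, 1 ≤ t → 1 / r + 1 = 1 / s + 1 / t → s ≠ ∞ := by
    rintro s t ht h rfl
    have h' : 1 / r + 1 ≤ 0 + 1 := by
      rw [h, zero_add]
      simpa using ENNReal.inv_le_one.mpr ht
    apply hr
    rw [← ENNReal.inv_eq_zero, ← one_div]
    exact le_antisymm ((ENNReal.add_le_add_iff_right one_ne_top).mp h') bot_le
  have hp_top : p ≠ ∞ := ne_top hq hpqr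
  have hq_top : q ≠ ∞ := ne_top hp (hpqr.trans (add_comm _ _))
  have hp0 : p ≠ 0 := (zero_lt_one.trans_le hp).ne'
  have hq0 : q ≠ 0 := (zero_lt_one.trans_le hq).ne'
  have hr0 : r ≠ 0 := ne_zero_of_one_div_add_one_eq hp hq hpqr
  set P := p.toReal
  set Q := q.toReal
  set R := r.toReal
  have hP : 1 ≤ P := by simpa using toReal_mono hp_top hp
  have hQ : 1 ≤ Q := by simpa using toReal_mono hq_top hq
  have hR : 0 < R := toReal_pos hr0 hr
  have hPQR : 1 / R + 1 = 1 / P + 1 / Q := by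
    have := congrArg ENNReal.toReal hpqr
    rwa [toReal_add (by simpa using hr0) one_ne_top, toReal_add (by simpa using hp0)
      (by simpa using hq0), toReal_div, toReal_div, toReal_div, toReal_one] at this
  rw [eLpNorm_eq_lintegral_rpow_enorm_toReal hr0 hr,
    eLpNorm_eq_lintegral_rpow_enorm_toReal hq0 hq_top]
  simp only [enorm_eq_self]
  calc (∫⁻ a, (∫⁻ b, K a b * g b ∂ν) ^ R ∂μ) ^ (1 / R)
      ≤ ((M ^ P) ^ (R / P) * (∫⁻ b, g b ^ Q ∂ν) ^ (R / Q)) ^ (1 / R) := by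
        gcongr
        exact lintegral_rpow_lintegral_mul_le hK hg hP hQ hR hPQR
          (fun a => lintegral_rpow_le_of_eLpNorm_le hp0 hp_top (hrow a))
          (fun b => lintegral_rpow_le_of_eLpNorm_le hp0 hp_top (hcol b))
    _ = M * (∫⁻ b, g b ^ Q ∂ν) ^ (1 / Q) := by
        rw [mul_rpow_of_nonneg _ _ (by positivity), ← rpow_mul, ← rpow_mul, ← rpow_mul]
        rw [show P * (R / P * (1 / R)) = 1 by field_simp, rpow_one]
        congr 2
        field_simp

theorem eLpNorm_lintegral_mul_le [SFinite μ] [SFinite ν] {K : α → β → ℝ≥0∞}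
    (hK : Measurable (Function.uncurry K)) {g : β → ℝ≥0∞} (hg : Measurable g) {p q r : ℝ≥0∞}
    (hp : 1 ≤ p) (hq : 1 ≤ q) (hpqr : 1 / r + 1 = 1 / p + 1 / q) {M : ℝ≥0∞}
    (hrow : ∀ a, eLpNorm (K a) p ν ≤ M) (hcol : ∀ b, eLpNorm (fun a => K a b) p μ ≤ M) :
    eLpNorm (fun a => ∫⁻ b, K a b * g b ∂ν) r μ ≤ M * eLpNorm g q ν := by
  rcases eq_or_ne r ∞ with rfl | hr
  · have : p.HolderConjugate q := holderConjugate_iff.mpr (by simpa using hpqr.symm)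
    exact eLpNorm_lintegral_mul_le_of_holderConjugate
      (fun a => (hK.comp measurable_prodMk_left).aemeasurable) hg.aemeasurable hrow
  · exact eLpNorm_lintegral_mul_le_of_ne_top hK hg hp hq hr hpqr hrow hcol

theorem eLpNorm_lintegral_kernel_mul_le [SFinite μ] [SFinite ν] {κ : Kernel (α × β) γ}
    [IsMarkovKernel κ] (hrow : ∀ a, κ.sectR a ∘ₘ ν = ρ) (hcol : ∀ b, κ.sectL b ∘ₘ μ = ρ)
    {f : γ → ℝ≥0∞} (hf : Measurable f) {g : β → ℝ≥0∞} (hg : Measurable g) {p q r : ℝ≥0∞}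
    (hp : 1 ≤ p) (hq : 1 ≤ q) (hpqr : 1 / r + 1 = 1 / p + 1 / q) :
    eLpNorm (fun a => ∫⁻ b, (∫⁻ c, f c ∂κ (a, b)) * g b ∂ν) r μ ≤ eLpNorm f p ρ * eLpNorm g q ν :=
  eLpNorm_lintegral_mul_le (hf.lintegral_kernel (κ := κ)) hg hp hq hpqr
    (fun a => eLpNorm_lintegral_kernel_le (hrow a) hf hp)
    (fun b => eLpNorm_lintegral_kernel_le (hcol b) hf hp)

end Kernels

theorem stmt_14_general {E : Type*} [MeasurableSpace E]
    (m : Measure E) [IsFiniteMeasure m]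
    (k : E → E → Measure E) (hkprob : ∀ x y, IsProbabilityMeasure (k x y))
    (hkmeas : Measurable (fun p : E × E => k p.1 p.2))
    (hksymm : ∀ x y, k x y = k y x)
    (hkinv : ∀ (x : E) (B : Set E), MeasurableSet B → ∫⁻ y, k x y B ∂m = m B)
    (p₁ p₂ r : ℝ≥0∞) (hp₁ : 1 ≤ p₁) (hp₂ : 1 ≤ p₂)
    (hr : 1 / r + 1 = 1 / p₁ + 1 / p₂)
    (f h : E → ℝ) (hf : MemLp f p₁ m) (hh : MemLp h p₂ m) :
    (∀ᵐ x ∂m, Integrable (fun y => (∫ ξ, f ξ ∂(k x y)) * h y) m) ∧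
    eLpNorm (fun x => ∫ y, (∫ ξ, f ξ ∂(k x y)) * h y ∂m) r m
      ≤ eLpNorm f p₁ m * eLpNorm h p₂ m := by
  let κ : Kernel (E × E) E := ⟨fun p => k p.1 p.2, hkmeas⟩
  have : IsMarkovKernel κ := ⟨fun p => hkprob p.1 p.2⟩
  have hrow : ∀ x, κ.sectR x ∘ₘ m = m := fun x => Measure.ext fun B hB => by
    rw [Measure.bind_apply hB (Kernel.aemeasurable _)]
    exact hkinv x B hB
  have hcol : ∀ y, κ.sectL y ∘ₘ m = m := fun y => by
    rw [show κ.sectL y = κ.sectR y from Kernel.ext fun x => hksymm x y, hrow y]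
  obtain ⟨f', hf'm, hff'⟩ := hf.1.aemeasurable
  obtain ⟨h', hh'm, hhh'⟩ := hh.1.aemeasurable
  set C : E → ℝ≥0∞ := fun x => ∫⁻ y, (∫⁻ ξ, ‖f' ξ‖ₑ ∂k x y) * ‖h' y‖ₑ ∂m
  have hbound : eLpNorm C r m ≤ eLpNorm f p₁ m * eLpNorm h p₂ m := by
    rw [eLpNorm_congr_ae hff', eLpNorm_congr_ae hhh', ← eLpNorm_enorm f', ← eLpNorm_enorm h']
    exact eLpNorm_lintegral_kernel_mul_le (κ := κ) hrow hcol hf'm.enorm hh'm.enorm hp₁ hp₂ hr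
  have hconv : ∀ x, (fun y => (∫ ξ, f ξ ∂k x y) * h y) =ᵐ[m]
      fun y => (∫ ξ, f' ξ ∂k x y) * h' y := fun x =>
    (ae_eq_integral_kernel_of_ae_eq_comp (κ := κ.sectR x) (by rwa [hrow x])).mul hhh'
  have hdom : ∀ x, ∫⁻ y, ‖(∫ ξ, f' ξ ∂k x y) * h' y‖ₑ ∂m ≤ C x :=
    fun x => lintegral_mono fun y => by
      rw [enorm_mul]
      gcongr
      exact enorm_integral_le_lintegral_enorm _
  refine ⟨?_, (eLpNorm_mono_enorm fun x => ?_).trans hbound⟩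
  · filter_upwards [ae_lt_top_of_eLpNorm_lt_top
      ((hf'm.enorm.lintegral_kernel (κ := κ)).mul
        (hh'm.enorm.comp measurable_snd)).lintegral_prod_right'.aemeasurable
      (ne_zero_of_one_div_add_one_eq hp₁ hp₂ hr)
      (hbound.trans_lt (mul_lt_top hf.2 hh.2))] with x hx
    refine Integrable.congr ⟨?_, (hdom x).trans_lt hx⟩ (hconv x).symm
    exact ((hf'm.stronglyMeasurable.integral_kernel (κ := κ.sectR x)).mul
      hh'm.stronglyMeasurable).aestronglyMeasurable
  · rw [integral_congr_ae (hconv x)]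
    exact (enorm_integral_le_lintegral_enorm _).trans (hdom x)

theorem stmt_14 {E : Type*} [MetricSpace E] [CompactSpace E] [MeasurableSpace E] [BorelSpace E]
    (m : Measure E) [IsFiniteMeasure m]
    (k : E → E → Measure E) (hkprob : ∀ x y, IsProbabilityMeasure (k x y))
    (hkmeas : Measurable (fun p : E × E => k p.1 p.2))
    (hksymm : ∀ x y, k x y = k y x)
    (hkinv : ∀ (x : E) (B : Set E), MeasurableSet B → ∫⁻ y, k x y B ∂m = m B)
    (p₁ p₂ r : ℝ≥0∞) (hp₁ : 1 ≤ p₁) (hp₂ : 1 ≤ p₂)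
    (hpsum : 1 ≤ 1 / p₁ + 1 / p₂)
    (hr : 1 / r + 1 = 1 / p₁ + 1 / p₂)
    (f h : E → ℝ) (hf : MemLp f p₁ m) (hh : MemLp h p₂ m) :
    (∀ᵐ x ∂m, Integrable (fun y => (∫ ξ, f ξ ∂(k x y)) * h y) m) ∧
    eLpNorm (fun x => ∫ y, (∫ ξ, f ξ ∂(k x y)) * h y ∂m) r m
      ≤ eLpNorm f p₁ m * eLpNorm h p₂ m :=
  stmt_14_general m k hkprob hkmeas hksymm hkinv p₁ p₂ r hp₁ hp₂ hr f h hf hh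
end

section
/- If μ is a finite signed Borel measure on E such that ∫_E φ_j dμ = 0 for every j ∈ ℕ, then μ = 0. -/
/-!
For `t > 0` the growth bound `‖φ_j‖_∞ ≤ C_ε e^{λ_j ε} ‖φ_j‖₂` with `ε = t/4` is beaten by the
factor `e^{-λ_j t}`, so `T_t h = ∑_j c_j(t) φ_j` converges uniformly with majorant
`const · e^{-λ_j t/2}`. Hence `T_t h` is continuous and may be integrated term by term, which
gives `∫ T_t h dμ = ∑_j c_j(t) ∫ φ_j dμ = 0`. Letting `t ↓ 0`, `T_t h → h` uniformly forces
`∫ h dμ = 0` for every continuous `h`, and a finite signed measure on a metric space is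
determined by these integrals.
-/

open MeasureTheory Filter Topology BoundedContinuousFunction

section Integral

variable {α : Type*} [MeasurableSpace α]

theorem integral_tsum_of_norm_le_summable {G : Type*} [NormedAddCommGroup G] [NormedSpace ℝ G]
    {ν : Measure α} [IsFiniteMeasure ν] {F : ℕ → α → G} {u : ℕ → ℝ}
    (hF : ∀ j, AEStronglyMeasurable (F j) ν) (hu : Summable u) (hFu : ∀ j x, ‖F j x‖ ≤ u j) :
    ∫ x, ∑' j, F j x ∂ν = ∑' j, ∫ x, F j x ∂ν := by
  have hFint : ∀ j, Integrable (F j) ν := fun j =>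
    (integrable_const (u j)).mono' (hF j) (Eventually.of_forall (hFu j))
  refine (integral_tsum_of_summable_integral_norm hFint ?_).symm
  refine (hu.mul_right (ν.real Set.univ)).of_nonneg_of_le
    (fun j => integral_nonneg fun x => norm_nonneg _) fun j => ?_
  calc ∫ x, ‖F j x‖ ∂ν ≤ ∫ _, u j ∂ν :=
        integral_mono (hFint j).norm (integrable_const _) (hFu j)
    _ = u j * ν.real Set.univ := by simp [mul_comm]

theorem abs_integral_sub_integral_le {ν : Measure α} [IsFiniteMeasure ν] {f g : α → ℝ} {S : ℝ}
    (hf : Integrable f ν) (hg : Integrable g ν) (hfg : ∀ x, |f x - g x| ≤ S) :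
    |∫ x, f x ∂ν - ∫ x, g x ∂ν| ≤ S * ν.real Set.univ := by
  rw [← integral_sub hf hg]
  exact norm_integral_le_of_norm_le_const (f := fun x => f x - g x) (Eventually.of_forall hfg)

theorem integral_eq_of_tendsto_abs_sub_le {ι : Type*} {l : Filter ι} [l.NeBot]
    {ν₁ ν₂ : Measure α} [IsFiniteMeasure ν₁] [IsFiniteMeasure ν₂]
    {h : α → ℝ} {g : ι → α → ℝ} {S : ι → ℝ} (hh₁ : Integrable h ν₁) (hh₂ : Integrable h ν₂)
    (hg : ∀ᶠ i in l, Integrable (g i) ν₁ ∧ Integrable (g i) ν₂ ∧ (∀ x, |g i x - h x| ≤ S i) ∧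
      ∫ x, g i x ∂ν₁ = ∫ x, g i x ∂ν₂)
    (hS : Tendsto S l (𝓝 0)) :
    ∫ x, h x ∂ν₁ = ∫ x, h x ∂ν₂ := by
  have hlim : Tendsto (fun i => S i * (ν₁.real Set.univ + ν₂.real Set.univ)) l (𝓝 0) := by
    simpa using hS.mul_const (ν₁.real Set.univ + ν₂.real Set.univ)
  refine sub_eq_zero.mp (abs_nonpos_iff.mp (ge_of_tendsto hlim ?_))
  filter_upwards [hg] with i ⟨hg₁, hg₂, hgh, hgeq⟩
  have hhg : ∀ x, |h x - g i x| ≤ S i := fun x => abs_sub_comm (g i x) (h x) ▸ hgh x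
  calc |∫ x, h x ∂ν₁ - ∫ x, h x ∂ν₂|
      = |(∫ x, h x ∂ν₁ - ∫ x, g i x ∂ν₁) - (∫ x, h x ∂ν₂ - ∫ x, g i x ∂ν₂)| := by
        rw [hgeq]; congr 1; ring
    _ ≤ |∫ x, h x ∂ν₁ - ∫ x, g i x ∂ν₁| + |∫ x, h x ∂ν₂ - ∫ x, g i x ∂ν₂| := abs_sub _ _
    _ ≤ S i * ν₁.real Set.univ + S i * ν₂.real Set.univ :=
        add_le_add (abs_integral_sub_integral_le hh₁ hg₁ hhg)
          (abs_integral_sub_integral_le hh₂ hg₂ hhg)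
    _ = S i * (ν₁.real Set.univ + ν₂.real Set.univ) := by ring

end Integral

theorem MeasureTheory.SignedMeasure.eq_zero_of_forall_integral_posPart_eq_negPart
    {Ω : Type*} [MeasurableSpace Ω] [TopologicalSpace Ω] [HasOuterApproxClosed Ω] [BorelSpace Ω]
    (μ : SignedMeasure Ω)
    (h : ∀ f : Ω →ᵇ ℝ, ∫ x, f x ∂μ.toJordanDecomposition.posPart
      = ∫ x, f x ∂μ.toJordanDecomposition.negPart) :
    μ = 0 := by
  rw [← μ.toSignedMeasure_toJordanDecomposition, JordanDecomposition.toSignedMeasure, sub_eq_zero]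
  congr 1
  exact ext_of_forall_integral_eq_of_IsFiniteMeasure h

section Semigroup

variable {E : Type*} [MeasurableSpace E] (m : Measure E) (lam : ℕ → ℝ) (φ : ℕ → E → ℝ)

noncomputable def semigroupCoeff (h : E → ℝ) (t : ℝ) (j : ℕ) : ℝ :=
  Real.exp (-lam j * t) * (∫ z, h z * φ j z ∂m) / Real.sqrt (∫ z, (φ j z) ^ 2 ∂m) ^ 2

/-- The `j`-th term of the series `(T_t h)(x)`. -/
noncomputable def semigroupTerm (h : E → ℝ) (t : ℝ) (j : ℕ) (x : E) : ℝ :=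
  Real.exp (-lam j * t) * (∫ z, h z * φ j z ∂m) * φ j x / Real.sqrt (∫ z, (φ j z) ^ 2 ∂m) ^ 2

theorem semigroupTerm_eq (h : E → ℝ) (t : ℝ) (j : ℕ) (x : E) :
    semigroupTerm m lam φ h t j x = semigroupCoeff m lam φ h t j * φ j x :=
  mul_div_right_comm _ _ _

theorem continuous_semigroupTerm [TopologicalSpace E] (hφc : ∀ j, Continuous (φ j))
    (h : E → ℝ) (t : ℝ) (j : ℕ) : Continuous (semigroupTerm m lam φ h t j) :=
  (continuous_const.mul (hφc j)).div_const _

theorem abs_semigroupTerm_le [IsFiniteMeasure m] {h : E → ℝ} {Hb C ε : ℝ} (t : ℝ)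
    (hHb₀ : 0 ≤ Hb) (hHb : ∀ x, |h x| ≤ Hb)
    (hφ : ∀ j x, |φ j x| ≤ C * Real.exp (lam j * ε) * Real.sqrt (∫ z, (φ j z) ^ 2 ∂m))
    (j : ℕ) (x : E) :
    |semigroupTerm m lam φ h t j x|
      ≤ Hb * C ^ 2 * m.real Set.univ * Real.exp (-lam j * (t - 2 * ε)) := by
  set N := Real.sqrt (∫ z, (φ j z) ^ 2 ∂m)
  have hcoeff : |∫ z, h z * φ j z ∂m| ≤ Hb * (C * Real.exp (lam j * ε) * N) * m.real Set.univ :=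
    norm_integral_le_of_norm_le_const (f := fun z => h z * φ j z) <| Eventually.of_forall fun z =>
      (abs_mul _ _).trans_le (mul_le_mul (hHb z) (hφ j z) (abs_nonneg _) hHb₀)
  have hexp : Real.exp (-lam j * (t - 2 * ε))
      = Real.exp (-lam j * t) * Real.exp (lam j * ε) * Real.exp (lam j * ε) := by
    rw [← Real.exp_add, ← Real.exp_add]; ring_nf
  rw [semigroupTerm, abs_div, abs_mul, abs_mul, abs_of_pos (Real.exp_pos _),
    abs_of_nonneg (sq_nonneg N)]
  refine div_le_of_le_mul₀ (sq_nonneg N) (by positivity) ?_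
  calc Real.exp (-lam j * t) * |∫ z, h z * φ j z ∂m| * |φ j x|
      ≤ Real.exp (-lam j * t) * (Hb * (C * Real.exp (lam j * ε) * N) * m.real Set.univ)
          * (C * Real.exp (lam j * ε) * N) :=
        mul_le_mul (mul_le_mul_of_nonneg_left hcoeff (Real.exp_pos _).le) (hφ j x)
          (abs_nonneg _) (mul_nonneg (Real.exp_pos _).le ((abs_nonneg _).trans hcoeff))
    _ = Hb * C ^ 2 * m.real Set.univ * Real.exp (-lam j * (t - 2 * ε)) * N ^ 2 := by
        rw [hexp]; ring

theorem exists_summable_bound_semigroupTerm [IsFiniteMeasure m] {h : E → ℝ} {Hb t : ℝ}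
    (hHb₀ : 0 ≤ Hb) (hHb : ∀ x, |h x| ≤ Hb)
    (hsum : Summable fun j => Real.exp (-lam j * (t / 2)))
    (hgrowth : ∃ C : ℝ, ∀ (j : ℕ) (x : E),
      |φ j x| ≤ C * Real.exp (lam j * (t / 4)) * Real.sqrt (∫ z, (φ j z) ^ 2 ∂m)) :
    ∃ u : ℕ → ℝ, Summable u ∧ ∀ j x, ‖semigroupTerm m lam φ h t j x‖ ≤ u j := by
  obtain ⟨C, hC⟩ := hgrowth
  refine ⟨_, hsum.mul_left (Hb * C ^ 2 * m.real Set.univ), fun j x => ?_⟩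
  calc ‖semigroupTerm m lam φ h t j x‖
      ≤ Hb * C ^ 2 * m.real Set.univ * Real.exp (-lam j * (t - 2 * (t / 4))) :=
        abs_semigroupTerm_le m lam φ t hHb₀ hHb hC j x
    _ = Hb * C ^ 2 * m.real Set.univ * Real.exp (-lam j * (t / 2)) := by ring_nf

theorem integral_tsum_semigroupTerm [TopologicalSpace E] [OpensMeasurableSpace E]
    (hφc : ∀ j, Continuous (φ j)) {h : E → ℝ} {t : ℝ} {u : ℕ → ℝ} (hu : Summable u)
    (hbound : ∀ j x, ‖semigroupTerm m lam φ h t j x‖ ≤ u j) (ν : Measure E) [IsFiniteMeasure ν] :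
    ∫ x, ∑' j, semigroupTerm m lam φ h t j x ∂ν
      = ∑' j, semigroupCoeff m lam φ h t j * ∫ x, φ j x ∂ν := by
  rw [integral_tsum_of_norm_le_summable
    (fun j => (continuous_semigroupTerm m lam φ hφc h t j).aestronglyMeasurable) hu hbound]
  simp_rw [semigroupTerm_eq, integral_const_mul]

end Semigroup

theorem stmt_15_general {E : Type*} [MetricSpace E] [CompactSpace E] [MeasurableSpace E] [BorelSpace E]
    (m : Measure E) [IsFiniteMeasure m]
    (lam : ℕ → ℝ)
    (hsum : ∀ t : ℝ, 0 < t → Summable fun j => Real.exp (-lam j * t))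
    (φ : ℕ → E → ℝ) (hφc : ∀ j, Continuous (φ j))
    (hgrowth : ∀ ε : ℝ, 0 < ε → ∃ C : ℝ, ∀ (j : ℕ) (x : E),
      |φ j x| ≤ C * Real.exp (lam j * ε) * Real.sqrt (∫ z, (φ j z) ^ 2 ∂m))
    (happrox : ∀ h : E → ℝ, Continuous h →
      Tendsto (fun t : ℝ => ⨆ x : E,
          |(∑' j, Real.exp (-lam j * t) * (∫ z, h z * φ j z ∂m) * φ j x /
            Real.sqrt (∫ z, (φ j z) ^ 2 ∂m) ^ 2) - h x|)
        (nhdsWithin 0 (Set.Ioi 0)) (nhds 0))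
    (μ : SignedMeasure E)
    (hμ : ∀ j : ℕ, ∫ x, φ j x ∂μ.toJordanDecomposition.posPart
        = ∫ x, φ j x ∂μ.toJordanDecomposition.negPart) :
    μ = 0 := by
  refine SignedMeasure.eq_zero_of_forall_integral_posPart_eq_negPart μ fun f => ?_
  refine integral_eq_of_tendsto_abs_sub_le (g := fun t x => ∑' j, semigroupTerm m lam φ f t j x)
    (f.integrable _) (f.integrable _) ?_ (happrox f f.continuous)
  filter_upwards [self_mem_nhdsWithin] with t (ht : 0 < t)
  obtain ⟨u, hu, hbound⟩ := exists_summable_bound_semigroupTerm m lam φ (norm_nonneg f)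
    f.norm_coe_le_norm (hsum _ (half_pos ht)) (hgrowth _ (by positivity))
  have hTc : Continuous fun x => ∑' j, semigroupTerm m lam φ f t j x :=
    continuous_tsum (continuous_semigroupTerm m lam φ hφc f t) hu hbound
  have hTint (ν : Measure E) [IsFiniteMeasure ν] :
      Integrable (fun x => ∑' j, semigroupTerm m lam φ f t j x) ν :=
    hTc.integrable_of_hasCompactSupport (.of_compactSpace _)
  refine ⟨hTint _, hTint _,
    le_ciSup (isCompact_range (hTc.sub f.continuous).abs).bddAbove, ?_⟩
  simp_rw [integral_tsum_semigroupTerm m lam φ hφc hu hbound, hμ]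

theorem stmt_15 {E : Type*} [MetricSpace E] [CompactSpace E] [MeasurableSpace E] [BorelSpace E]
    (m : Measure E) [IsFiniteMeasure m]
    (lam : ℕ → ℝ) (hlam : ∀ j, 0 ≤ lam j)
    (hsum : ∀ t : ℝ, 0 < t → Summable fun j => Real.exp (-lam j * t))
    (φ : ℕ → E → ℝ) (hφc : ∀ j, Continuous (φ j))
    (hφpos : ∀ j, 0 < Real.sqrt (∫ z, (φ j z) ^ 2 ∂m))
    (hφbdd : ∃ M : ℝ, ∀ j, Real.sqrt (∫ z, (φ j z) ^ 2 ∂m) ≤ M)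
    (hgrowth : ∀ ε : ℝ, 0 < ε → ∃ C : ℝ, ∀ (j : ℕ) (x : E),
      |φ j x| ≤ C * Real.exp (lam j * ε) * Real.sqrt (∫ z, (φ j z) ^ 2 ∂m))
    (happrox : ∀ h : E → ℝ, Continuous h →
      Tendsto (fun t : ℝ => ⨆ x : E,
          |(∑' j, Real.exp (-lam j * t) * (∫ z, h z * φ j z ∂m) * φ j x /
            Real.sqrt (∫ z, (φ j z) ^ 2 ∂m) ^ 2) - h x|)
        (nhdsWithin 0 (Set.Ioi 0)) (nhds 0))
    (μ : SignedMeasure E)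
    (hμ : ∀ j : ℕ, ∫ x, φ j x ∂μ.toJordanDecomposition.posPart
        = ∫ x, φ j x ∂μ.toJordanDecomposition.negPart) :
    μ = 0 :=
  stmt_15_general m lam hsum φ hφc hgrowth happrox μ hμ
end
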